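/- arXiv:1711.04954 — 11 statements merged into one kernel-verified Lean document; each statement's English description precedes it below -/
import Mathlib

section
/- Let m be a nonnegative integer, k = 4m+3, and let b_0, b_1, ..., b_n be a generated sequence (b_0 = 2 and each b_{i+1} is P1(b_i), P2(b_i), or P3(b_i)). Then the sequence is exactly one of Type 1, Type 2, or Type 3. Moreover: (i) it is Type 1 if and only if 0 ≤ b_n < k; (ii) it is Type 2 if and only if b_n ≥ k; (iii) it is Type 3 if and only if b_n < 0. -/
/-- P1(x) = 2x + 2 -/
def P1 (x : ℤ) : ℤ := 2 * x + 2
/-- P2(x) = 2x -/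
def P2 (x : ℤ) : ℤ := 2 * x
/-- P3(x) = 2x + 1 - k -/
def P3 (k x : ℤ) : ℤ := 2 * x + 1 - k

/-- b_0, ..., b_n is generated: b_0 = 2 and each next term is P1, P2 or P3 of the previous. -/
def Generated (k : ℤ) (n : ℕ) (b : ℕ → ℤ) : Prop :=
  b 0 = 2 ∧ ∀ i < n, b (i + 1) = P1 (b i) ∨ b (i + 1) = P2 (b i) ∨ b (i + 1) = P3 k (b i)

/-- Type 1 : 0 ≤ b_i < k for all i = 0, ..., n. -/
def TypeOne (k : ℤ) (n : ℕ) (b : ℕ → ℤ) : Prop :=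
  ∀ i ≤ n, 0 ≤ b i ∧ b i < k

/-- Type 2 : there is t < n with 0 ≤ b_i < k for i ≤ t and b_i ≥ k for t < i ≤ n. -/
def TypeTwo (k : ℤ) (n : ℕ) (b : ℕ → ℤ) : Prop :=
  ∃ t < n, (∀ i ≤ t, 0 ≤ b i ∧ b i < k) ∧ ∀ i, t < i → i ≤ n → k ≤ b i

/-- Type 3 : there is t < n with 0 ≤ b_i < k for i ≤ t and b_i < 0 for t < i ≤ n. -/
def TypeThree (k : ℤ) (n : ℕ) (b : ℕ → ℤ) : Prop :=
  ∃ t < n, (∀ i ≤ t, 0 ≤ b i ∧ b i < k) ∧ ∀ i, t < i → i ≤ n → b i < 0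

theorem stmt0 (m : ℕ) (k : ℤ) (hk : k = 4 * m + 3) (n : ℕ) (b : ℕ → ℤ)
    (hgen : Generated k n b) :
    ((TypeOne k n b ∧ ¬ TypeTwo k n b ∧ ¬ TypeThree k n b) ∨
     (¬ TypeOne k n b ∧ TypeTwo k n b ∧ ¬ TypeThree k n b) ∨
     (¬ TypeOne k n b ∧ ¬ TypeTwo k n b ∧ TypeThree k n b)) ∧
    (TypeOne k n b ↔ 0 ≤ b n ∧ b n < k) ∧
    (TypeTwo k n b ↔ k ≤ b n) ∧
    (TypeThree k n b ↔ b n < 0) := by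
  classical
  obtain ⟨hb0, hstep⟩ := hgen
  have hm : (0 : ℤ) ≤ (m : ℤ) := Int.natCast_nonneg m
  have hk3 : (3 : ℤ) ≤ k := by omega
  -- evenness
  have heven : ∀ i, (2 : ℤ) ∣ b i ∨ n < i := by
    intro i
    induction i with
    | zero => left; rw [hb0]
    | succ i ih =>
      by_cases hi : i < n
      · rcases ih with h | h
        · left
          rcases hstep i hi with h1 | h1 | h1 <;>
            simp only [P1, P2, P3] at h1 <;> omega
        · omega
      · right; omega
  -- absorbing: negative stays negative
  have habs3 : ∀ s, s ≤ n → b s < 0 → ∀ i, s ≤ i → i ≤ n → b i < 0 := by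
    intro s hsn hs i hsi hin
    induction i, hsi using Nat.le_induction with
    | base => exact hs
    | succ i h ih =>
      have hbi : b i < 0 := ih (by omega)
      have hev : (2 : ℤ) ∣ b i := by rcases heven i with h | h; exact h; omega
      rcases hstep i (by omega) with h1 | h1 | h1 <;>
        simp only [P1, P2, P3] at h1 <;> omega
  -- absorbing: ≥ k stays ≥ k
  have habs2 : ∀ s, s ≤ n → k ≤ b s → ∀ i, s ≤ i → i ≤ n → k ≤ b i := by
    intro s hsn hs i hsi hin
    induction i, hsi using Nat.le_induction with
    | base => exact hs
    | succ i h ih =>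
      have hbi : k ≤ b i := ih (by omega)
      rcases hstep i (by omega) with h1 | h1 | h1 <;>
        simp only [P1, P2, P3] at h1 <;> omega
  -- forward implications
  have f1 : TypeOne k n b → 0 ≤ b n ∧ b n < k := fun h => h n le_rfl
  have f2 : TypeTwo k n b → k ≤ b n := by
    rintro ⟨t, ht, _, h⟩; exact h n ht le_rfl
  have f3 : TypeThree k n b → b n < 0 := by
    rintro ⟨t, ht, _, h⟩; exact h n ht le_rfl
  -- key trichotomy
  have key : (TypeOne k n b ∧ 0 ≤ b n ∧ b n < k) ∨ (TypeTwo k n b ∧ k ≤ b n) ∨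
      (TypeThree k n b ∧ b n < 0) := by
    by_cases hT1 : TypeOne k n b
    · exact Or.inl ⟨hT1, f1 hT1⟩
    · unfold TypeOne at hT1
      push_neg at hT1
      have hex : ∃ i, i ≤ n ∧ (b i < 0 ∨ k ≤ b i) := by
        obtain ⟨i, hi, h⟩ := hT1
        exact ⟨i, hi, by omega⟩
      set s := Nat.find hex with hs
      obtain ⟨hsn, hsval⟩ := Nat.find_spec hex
      have hs0 : s ≠ 0 := by
        intro h
        have := hsval
        rw [← hs, h, hb0] at this
        omega
      have hgood : ∀ i, i ≤ s - 1 → 0 ≤ b i ∧ b i < k := by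
        intro i hi
        have hi' : i < s := by omega
        have := Nat.find_min hex hi'
        push_neg at this
        have hin : i ≤ n := by omega
        have := this hin
        omega
      have htn : s - 1 < n := by omega
      rcases hsval with hneg | hge
      · right; right
        refine ⟨⟨s - 1, htn, hgood, fun i hti hin => habs3 s hsn hneg i (by omega) hin⟩, ?_⟩
        exact habs3 s hsn hneg n (by omega) le_rfl
      · right; left
        refine ⟨⟨s - 1, htn, hgood, fun i hti hin => habs2 s hsn hge i (by omega) hin⟩, ?_⟩
        exact habs2 s hsn hge n (by omega) le_rfl
  rcases key with ⟨h1, hb⟩ | ⟨h2, hb⟩ | ⟨h3, hb⟩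
  · refine ⟨Or.inl ⟨h1, fun h => by have := f2 h; omega, fun h => by have := f3 h; omega⟩,
      ⟨fun _ => hb, fun _ => h1⟩,
      ⟨fun h => f2 h, fun h => by omega⟩,
      ⟨fun h => f3 h, fun h => by omega⟩⟩
  · refine ⟨Or.inr (Or.inl ⟨fun h => by have := f1 h; omega, h2,
      fun h => by have := f3 h; omega⟩),
      ⟨fun h => by have := f1 h; omega, fun h => by omega⟩,
      ⟨fun _ => hb, fun _ => h2⟩,
      ⟨fun h => f3 h, fun h => by omega⟩⟩
  · refine ⟨Or.inr (Or.inr ⟨fun h => by have := f1 h; omega,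
      fun h => by have := f2 h; omega, h3⟩),
      ⟨fun h => by have := f1 h; omega, fun h => by omega⟩,
      ⟨fun h => by have := f2 h; omega, fun h => by omega⟩,
      ⟨fun _ => hb, fun _ => h3⟩⟩
end

section
/- Let m be a nonnegative integer, k = 4m+3, let t, n be nonnegative integers with t ≤ n, and let b_0, ..., b_n be a generated sequence. If the initial segment b_0, b_1, ..., b_t is Type 2, then the whole sequence b_0, b_1, ..., b_n is Type 2. -/
theorem stmt1 (m : ℕ) (k : ℤ) (hk : k = 4 * m + 3) (t n : ℕ) (htn : t ≤ n)
    (b : ℕ → ℤ) (hgen : Generated k n b) (h2 : TypeTwo k t b) :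
    TypeTwo k n b := by
  obtain ⟨t', ht', hlow, hhigh⟩ := h2
  refine ⟨t', lt_of_lt_of_le ht' htn, hlow, ?_⟩
  intro i
  induction i with
  | zero => intro h _; omega
  | succ j ih =>
    intro hti hin
    by_cases hcase : j + 1 ≤ t
    · exact hhigh (j + 1) hti hcase
    · have hbj : k ≤ b j := by
        by_cases hjt : j ≤ t
        · exact hhigh j (by omega) hjt
        · exact ih (by omega) (by omega)
      obtain ⟨_, hstep⟩ := hgen
      rcases hstep j (by omega) with h | h | h <;>
        simp only [P1, P2, P3] at h <;> omega
end

section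
/- Let m be a nonnegative integer, k = 4m+3, and let t < n be nonnegative integers. If b_0, ..., b_t is a generated sequence that is Type 1, then there exist integers b_{t+1}, ..., b_n, each obtained from its predecessor by applying P1, P2, or P3, such that the extended sequence b_0, ..., b_n is a generated sequence that is Type 1. -/
/-- step function: pick P1 if it stays below k, else P3. -/
def stepF (k x : ℤ) : ℤ := if 2 * x + 2 < k then 2 * x + 2 else 2 * x + 1 - k

/-- the extended sequence -/
def extSeq (k : ℤ) (b : ℕ → ℤ) (t : ℕ) : ℕ → ℤ
  | 0 => b 0
  | i + 1 => if i + 1 ≤ t then b (i + 1) else stepF k (extSeq k b t i)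

lemma stepF_cases (k x : ℤ) :
    stepF k x = P1 x ∨ stepF k x = P2 x ∨ stepF k x = P3 k x := by
  unfold stepF P1 P2 P3
  split <;> simp

lemma stepF_bounds (m : ℕ) (k : ℤ) (hk : k = 4 * m + 3) (x : ℤ)
    (hx : 0 ≤ x ∧ x < k) : 0 ≤ stepF k x ∧ stepF k x < k := by
  unfold stepF
  have h2 : ∃ y : ℤ, x = y := ⟨x, rfl⟩
  split <;> omega

theorem stmt4 (m : ℕ) (k : ℤ) (hk : k = 4 * m + 3) (t n : ℕ) (htn : t < n)
    (b : ℕ → ℤ) (hgen : Generated k t b) (h1 : TypeOne k t b) :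
    ∃ c : ℕ → ℤ, (∀ i ≤ t, c i = b i) ∧ Generated k n c ∧ TypeOne k n c := by
  refine ⟨extSeq k b t, ?_, ?_, ?_⟩
  · intro i hi
    cases i with
    | zero => rfl
    | succ j => simp [extSeq, hi]
  · constructor
    · exact hgen.1
    · intro i _
      by_cases hit : i + 1 ≤ t
      · have := hgen.2 i (by omega)
        have e1 : extSeq k b t (i + 1) = b (i + 1) := by simp [extSeq, hit]
        have e2 : extSeq k b t i = b i := by
          cases i with
          | zero => rfl
          | succ j => simp [extSeq]; omega
        rw [e1, e2]; exact this
      · have e1 : extSeq k b t (i + 1) = stepF k (extSeq k b t i) := by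
          simp [extSeq, hit]
        rw [e1]; exact stepF_cases k _
  · intro i hin
    clear htn
    induction i with
    | zero => exact h1 0 (Nat.zero_le _)
    | succ j ih =>
      by_cases hit : j + 1 ≤ t
      · have e1 : extSeq k b t (j + 1) = b (j + 1) := by simp [extSeq, hit]
        rw [e1]; exact h1 _ hit
      · have e1 : extSeq k b t (j + 1) = stepF k (extSeq k b t j) := by
          simp [extSeq, hit]
        rw [e1]; exact stepF_bounds m k hk _ (ih (by omega))
end

section
/- Let m be a nonnegative integer and k = 4m+3. A generated sequence c_0, c_1, ..., c_n is Type 2 if and only if there exist a generated sequence b_0, b_1, ..., b_n that is Type 1 and a nonnegative integer j < n such that b_t = c_t for t = 0, 1, ..., j, 2m+2 ≤ c_j = b_j < k, b_{j+1} = P3(b_j) = P3(c_j), and c_{j+1} = P1(c_j) or c_{j+1} = P2(c_j). -/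
/-- Extension of `c` beyond index `t`, staying in [0,k) by choosing P2 or P3. -/
def Bseq (k : ℤ) (c : ℕ → ℤ) (t : ℕ) : ℕ → ℤ
  | 0 => c 0
  | i + 1 =>
    if i + 1 ≤ t then c (i + 1)
    else if 2 * Bseq k c t i < k then P2 (Bseq k c t i) else P3 k (Bseq k c t i)

lemma Bseq_le (k : ℤ) (c : ℕ → ℤ) (t : ℕ) : ∀ i ≤ t, Bseq k c t i = c i := by
  intro i hi
  cases i with
  | zero => rfl
  | succ i => rw [Bseq, if_pos hi]

theorem stmt5 (m : ℕ) (k : ℤ) (hk : k = 4 * m + 3) (n : ℕ) (c : ℕ → ℤ)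
    (hgen : Generated k n c) :
    TypeTwo k n c ↔
      ∃ b : ℕ → ℤ, Generated k n b ∧ TypeOne k n b ∧
        ∃ j < n, (∀ t ≤ j, b t = c t) ∧
          (2 * (m : ℤ) + 2 ≤ c j ∧ c j < k) ∧
          b (j + 1) = P3 k (b j) ∧ b (j + 1) = P3 k (c j) ∧
          (c (j + 1) = P1 (c j) ∨ c (j + 1) = P2 (c j)) := by
  have hev : ∀ i, i ≤ n → ∃ u : ℤ, c i = 2 * u := by
    intro i
    induction i with
    | zero => exact fun _ => ⟨1, by rw [hgen.1]; ring⟩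
    | succ i ih =>
      intro hi
      obtain ⟨u, hu⟩ := ih (by omega)
      rcases hgen.2 i (by omega) with h | h | h <;>
        simp only [P1, P2, P3] at h
      · exact ⟨2 * u + 1, by omega⟩
      · exact ⟨2 * u, by omega⟩
      · exact ⟨2 * u - 2 * m - 1, by omega⟩
  constructor
  · rintro ⟨t, ht, h1, h2⟩
    have hct := h1 t le_rfl
    have hct1 := h2 (t + 1) (by omega) (by omega)
    have hstep := hgen.2 t ht
    obtain ⟨u, hu⟩ := hev t (by omega)
    -- the step at t is P1 or P2, and c t ≥ 2m+2
    have hP12 : c (t + 1) = P1 (c t) ∨ c (t + 1) = P2 (c t) := by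
      rcases hstep with h | h | h
      · exact Or.inl h
      · exact Or.inr h
      · exfalso; simp only [P3] at h; omega
    have hbig : 2 * (m : ℤ) + 2 ≤ c t := by
      rcases hP12 with h | h <;> simp only [P1, P2] at h <;> omega
    -- bounds for Bseq beyond t
    have key : ∀ i, t ≤ i → 0 ≤ Bseq k c t i ∧ Bseq k c t i < k := by
      intro i hi
      induction i, hi using Nat.le_induction with
      | base => rw [Bseq_le k c t t le_rfl]; exact hct
      | succ i hi ih =>
        rw [Bseq, if_neg (by omega)]
        split_ifs with h
        · simp only [P2]; omega
        · simp only [P3]; omega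
    refine ⟨Bseq k c t, ⟨by rw [show Bseq k c t 0 = c 0 from rfl, hgen.1], ?_⟩, ?_,
      t, ht, fun s hs => Bseq_le k c t s hs, ⟨hbig, hct.2⟩, ?_, ?_, hP12⟩
    · intro i hi
      by_cases hit : i + 1 ≤ t
      · rw [Bseq, if_pos hit, Bseq_le k c t i (by omega)]
        exact hgen.2 i hi
      · rw [Bseq, if_neg hit]
        split_ifs with h
        · exact Or.inr (Or.inl rfl)
        · exact Or.inr (Or.inr rfl)
    · intro i hi
      rcases le_or_gt i t with h | h
      · rw [Bseq_le k c t i h]; exact h1 i h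
      · exact key i (by omega)
    · rw [Bseq, if_neg (by omega), Bseq_le k c t t le_rfl, if_neg (by omega)]
    · rw [Bseq, if_neg (by omega), Bseq_le k c t t le_rfl, if_neg (by omega)]
  · rintro ⟨b, hbgen, hb1, j, hj, hbc, ⟨hcj1, hcj2⟩, _, _, hc1⟩
    refine ⟨j, hj, ?_, ?_⟩
    · intro i hi
      rw [← hbc i hi]
      exact hb1 i (le_trans hi (by omega))
    · have main : ∀ d : ℕ, j + 1 + d ≤ n → k ≤ c (j + 1 + d) := by
        intro d
        induction d with
        | zero =>
          intro _
          rcases hc1 with h | h <;> simp only [P1, P2] at h <;> simpa [h] using by omega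
        | succ d ih =>
          intro hd
          have hkd := ih (by omega)
          rcases hgen.2 (j + 1 + d) (by omega) with h | h | h <;>
            simp only [P1, P2, P3] at h <;>
          · rw [show j + 1 + (d + 1) = j + 1 + d + 1 by omega, h]; omega
      intro i hij hin
      obtain ⟨d, rfl⟩ : ∃ d, i = j + 1 + d := ⟨i - j - 1, by omega⟩
      exact main d hin
end

section
/- Let m be a nonnegative integer, k = 4m+3, and let x, y, z be nonnegative integers less than 2^{n+1} with binary digits x_i, y_i, z_i, satisfying x ⊕ y ⊕ z = 0, x_n = z_n = 1 and y_n = 0. Let s_0, ..., s_n be the sequence generated by x, y, z. Then y = ⌊(x+z)/k⌋ if and only if s_0, ..., s_n is Type 1. Moreover, when y = ⌊(x+z)/k⌋, for each j with 0 ≤ j < n the following hold: (a) if s_j ≤ 2m, then either (x_{n−j−1}, y_{n−j−1}, z_{n−j−1}) = (1,0,1) and s_{j+1} = P1(s_j), or (x_{n−j−1}, y_{n−j−1}, z_{n−j−1}) = (0,0,0) and s_{j+1} = P2(s_j); (b) if s_j ≥ 2m+2, then (x_{n−j−1}, y_{n−j−1}, z_{n−j−1}) = (1,1,0) or (0,1,1),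 and s_{j+1} = P3(s_j). -/
/-- The i-th binary digit of x. -/
def bitd (x i : ℕ) : ℕ := x / 2 ^ i % 2

/-- The sequence generated by x, y, z :
s_j = Σ_{i=n−j}^{n} (x_i + z_i − k·y_i)·2^{i+j−n}. -/
def sgen (k : ℤ) (n : ℕ) (x y z : ℕ) (j : ℕ) : ℤ :=
  ∑ i ∈ Finset.Icc (n - j) n,
    ((bitd x i : ℤ) + (bitd z i : ℤ) - k * (bitd y i : ℤ)) * 2 ^ (i + j - n)

/-!
Writing `d_i = x_i + z_i - k y_i`, the sequence satisfies `s_0 = d_n` and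
`s_{j+1} = 2 s_j + d_{n-j-1}`, and unwinding gives
`s_j = ⌊x/2^{n-j}⌋ + ⌊z/2^{n-j}⌋ - k ⌊y/2^{n-j}⌋`, so `s_n = x + z - k y`.
Since `x ⊕ y ⊕ z = 0`, every digit triple is one of `000, 101, 110, 011`, hence
`d_i ∈ {0, 2, 1 - k}`; as `k` is odd, every `s_j` is even. An even `s ∉ [0, k)` is either `≤ -2`
or `≥ k`, and both regions are preserved by `s ↦ 2 s + d`. So the sequence is Type 1 iff
`s_n = x + z - k y ∈ [0, k)`, i.e. iff `y = ⌊(x + z)/k⌋`. The transition rules follow by comparing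
`2 s_j + d` with the bounds `0 ≤ s_{j+1} < k`.
-/

def sgenDigit (k : ℤ) (x y z i : ℕ) : ℤ := (bitd x i : ℤ) + (bitd z i : ℤ) - k * (bitd y i : ℤ)

lemma bitd_eq_toNat_testBit (x i : ℕ) : bitd x i = (x.testBit i).toNat :=
  (Nat.toNat_testBit x i).symm

lemma div_two_pow_eq (x i : ℕ) : x / 2 ^ i = 2 * (x / 2 ^ (i + 1)) + bitd x i := by
  rw [bitd, pow_succ, ← Nat.div_div_eq_div_mul, Nat.div_add_mod]

lemma bitd_triple {x y z : ℕ} (hxor : x ^^^ y ^^^ z = 0) (i : ℕ) :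
    (bitd x i = 0 ∧ bitd y i = 0 ∧ bitd z i = 0) ∨ (bitd x i = 1 ∧ bitd y i = 0 ∧ bitd z i = 1) ∨
      (bitd x i = 1 ∧ bitd y i = 1 ∧ bitd z i = 0) ∨
      (bitd x i = 0 ∧ bitd y i = 1 ∧ bitd z i = 1) := by
  have h := congrArg (Nat.testBit · i) hxor
  simp only [Nat.testBit_xor, Nat.zero_testBit] at h
  simp only [bitd_eq_toNat_testBit]
  revert h
  cases x.testBit i <;> cases y.testBit i <;> cases z.testBit i <;> simp

lemma sgenDigit_cases {x y z : ℕ} (hxor : x ^^^ y ^^^ z = 0) (k : ℤ) (i : ℕ) :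
    sgenDigit k x y z i = 0 ∨ sgenDigit k x y z i = 2 ∨ sgenDigit k x y z i = 1 - k := by
  rcases bitd_triple hxor i with h | h | h | h <;> simp [sgenDigit, h]

lemma eq_div_iff_sub_mul_mem_Ico {a k y : ℕ} (hk : 0 < k) :
    y = a / k ↔ (a : ℤ) - k * y ∈ Set.Ico 0 (k : ℤ) := by
  have hyk : ((y * k : ℕ) : ℤ) = k * y := by push_cast; ring
  rw [eq_comm, Nat.div_eq_iff hk, Set.mem_Ico]
  omega

section Sgen

variable (k : ℤ) (n x y z : ℕ)

lemma sgen_eq_sum (j : ℕ) :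
    sgen k n x y z j = ∑ i ∈ Finset.Icc (n - j) n, sgenDigit k x y z i * 2 ^ (i + j - n) :=
  rfl

lemma sgen_zero : sgen k n x y z 0 = sgenDigit k x y z n := by
  simp [sgen, sgenDigit]

lemma sgen_succ {j : ℕ} (hj : j < n) :
    sgen k n x y z (j + 1) = 2 * sgen k n x y z j + sgenDigit k x y z (n - j - 1) := by
  have hIcc : Finset.Icc (n - (j + 1)) n = insert (n - j - 1) (Finset.Icc (n - j) n) := by
    ext a; simp only [Finset.mem_Icc, Finset.mem_insert]; omega
  have hterm : ∀ i ∈ Finset.Icc (n - j) n,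
      sgenDigit k x y z i * 2 ^ (i + (j + 1) - n) = sgenDigit k x y z i * 2 ^ (i + j - n) * 2 := by
    intro i hi
    rw [Finset.mem_Icc] at hi
    rw [mul_assoc, ← pow_succ, show i + (j + 1) - n = i + j - n + 1 by omega]
  rw [sgen_eq_sum, sgen_eq_sum, hIcc, Finset.sum_insert (by simp only [Finset.mem_Icc]; omega),
    show n - j - 1 + (j + 1) - n = 0 by omega, Finset.sum_congr rfl hterm, ← Finset.sum_mul]
  ring

lemma sgen_eq_div (hx : x < 2 ^ (n + 1)) (hy : y < 2 ^ (n + 1)) (hz : z < 2 ^ (n + 1)) {j : ℕ}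
    (hj : j ≤ n) :
    sgen k n x y z j = ↑(x / 2 ^ (n - j)) + ↑(z / 2 ^ (n - j)) - k * ↑(y / 2 ^ (n - j)) := by
  induction j with
  | zero =>
    have htop : ∀ w < 2 ^ (n + 1), bitd w n = w / 2 ^ n := fun w hw =>
      Nat.mod_eq_of_lt (Nat.div_lt_of_lt_mul (by rwa [← pow_succ]))
    rw [sgen_zero, sgenDigit, htop x hx, htop y hy, htop z hz, Nat.sub_zero]
  | succ j ih =>
    obtain ⟨i, hi⟩ : ∃ i, n - j = i + 1 := ⟨n - j - 1, by omega⟩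
    rw [sgen_succ k n x y z (by omega), ih (by omega), hi, Nat.add_sub_cancel,
      show n - (j + 1) = i by omega, div_two_pow_eq x i, div_two_pow_eq y i, div_two_pow_eq z i,
      sgenDigit]
    push_cast
    ring

lemma sgen_self (hx : x < 2 ^ (n + 1)) (hy : y < 2 ^ (n + 1)) (hz : z < 2 ^ (n + 1)) :
    sgen k n x y z n = x + z - k * y := by
  simpa using sgen_eq_div k n x y z hx hy hz le_rfl

end Sgen

section Dynamics

variable {k : ℤ} {n x y z : ℕ}

lemma even_sgen (hk : Odd k) (hxor : x ^^^ y ^^^ z = 0) {j : ℕ} (hj : j ≤ n) :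
    Even (sgen k n x y z j) := by
  rw [Int.odd_iff] at hk
  induction j with
  | zero =>
    rw [sgen_zero, Int.even_iff]
    rcases sgenDigit_cases hxor k n with h | h | h <;> omega
  | succ j ih =>
    have ih := Int.even_iff.mp (ih (by omega))
    rw [sgen_succ k n x y z (by omega), Int.even_iff]
    rcases sgenDigit_cases hxor k (n - j - 1) with h | h | h <;> omega

lemma sgen_succ_notMem_Ico (hxor : x ^^^ y ^^^ z = 0) {j : ℕ} (hj : j < n)
    (heven : Even (sgen k n x y z j)) (hout : sgen k n x y z j ∉ Set.Ico 0 k) :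
    sgen k n x y z (j + 1) ∉ Set.Ico 0 k := by
  rw [Int.even_iff] at heven
  rw [Set.mem_Ico] at hout ⊢
  rw [sgen_succ k n x y z hj]
  rcases sgenDigit_cases hxor k (n - j - 1) with h | h | h <;> omega

lemma forall_sgen_mem_Ico_iff (hk : Odd k) (hxor : x ^^^ y ^^^ z = 0) :
    (∀ j ≤ n, sgen k n x y z j ∈ Set.Ico 0 k) ↔ sgen k n x y z n ∈ Set.Ico 0 k := by
  refine ⟨fun h => h n le_rfl, fun hn j hj => ?_⟩
  by_contra hout
  suffices ∀ i, j ≤ i → i ≤ n → sgen k n x y z i ∉ Set.Ico 0 k from this n hj le_rfl hn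
  intro i hji
  induction i, hji using Nat.le_induction with
  | base => exact fun _ => hout
  | succ i hji ih =>
    exact fun hi => sgen_succ_notMem_Ico hxor hi (even_sgen hk hxor (by omega)) (ih (by omega))

lemma sgen_succ_of_two_mul_add_one_lt (hxor : x ^^^ y ^^^ z = 0) {j : ℕ} (hj : j < n)
    (hsmall : 2 * sgen k n x y z j + 1 < k) (hnext : 0 ≤ sgen k n x y z (j + 1)) :
    (bitd x (n - j - 1) = 1 ∧ bitd y (n - j - 1) = 0 ∧ bitd z (n - j - 1) = 1 ∧
        sgen k n x y z (j + 1) = P1 (sgen k n x y z j)) ∨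
      (bitd x (n - j - 1) = 0 ∧ bitd y (n - j - 1) = 0 ∧ bitd z (n - j - 1) = 0 ∧
        sgen k n x y z (j + 1) = P2 (sgen k n x y z j)) := by
  rw [sgen_succ k n x y z hj, sgenDigit, P1, P2] at *
  rcases bitd_triple hxor (n - j - 1) with
      ⟨hx, hy, hz⟩ | ⟨hx, hy, hz⟩ | ⟨hx, hy, hz⟩ | ⟨hx, hy, hz⟩ <;>
    rw [hx, hy, hz] at hnext ⊢ <;> omega

lemma sgen_succ_of_le_two_mul (hxor : x ^^^ y ^^^ z = 0) {j : ℕ} (hj : j < n)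
    (hlarge : k ≤ 2 * sgen k n x y z j) (hnext : sgen k n x y z (j + 1) < k) :
    ((bitd x (n - j - 1) = 1 ∧ bitd y (n - j - 1) = 1 ∧ bitd z (n - j - 1) = 0) ∨
        (bitd x (n - j - 1) = 0 ∧ bitd y (n - j - 1) = 1 ∧ bitd z (n - j - 1) = 1)) ∧
      sgen k n x y z (j + 1) = P3 k (sgen k n x y z j) := by
  rw [sgen_succ k n x y z hj, sgenDigit, P3] at *
  rcases bitd_triple hxor (n - j - 1) with
      ⟨hx, hy, hz⟩ | ⟨hx, hy, hz⟩ | ⟨hx, hy, hz⟩ | ⟨hx, hy, hz⟩ <;>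
    rw [hx, hy, hz] at hnext ⊢ <;> omega

end Dynamics

theorem stmt8_general (m n k : ℕ) (hk : k = 4 * m + 3) (x y z : ℕ)
    (hx : x < 2 ^ (n + 1)) (hy : y < 2 ^ (n + 1)) (hz : z < 2 ^ (n + 1))
    (hxor : x ^^^ y ^^^ z = 0) :
    (y = (x + z) / k ↔ ∀ j ≤ n, 0 ≤ sgen k n x y z j ∧ sgen k n x y z j < k) ∧
    (y = (x + z) / k →
      ∀ j < n,
        (sgen (k : ℤ) n x y z j ≤ 2 * m →
          ((bitd x (n - j - 1) = 1 ∧ bitd y (n - j - 1) = 0 ∧ bitd z (n - j - 1) = 1 ∧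
              sgen k n x y z (j + 1) = P1 (sgen k n x y z j)) ∨
           (bitd x (n - j - 1) = 0 ∧ bitd y (n - j - 1) = 0 ∧ bitd z (n - j - 1) = 0 ∧
              sgen k n x y z (j + 1) = P2 (sgen k n x y z j)))) ∧
        (2 * (m : ℤ) + 2 ≤ sgen k n x y z j →
          ((bitd x (n - j - 1) = 1 ∧ bitd y (n - j - 1) = 1 ∧ bitd z (n - j - 1) = 0) ∨
           (bitd x (n - j - 1) = 0 ∧ bitd y (n - j - 1) = 1 ∧ bitd z (n - j - 1) = 1)) ∧
          sgen k n x y z (j + 1) = P3 k (sgen k n x y z j))) := by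
  have hodd : Odd (k : ℤ) := ⟨2 * m + 1, by rw [hk]; push_cast; ring⟩
  have htype1 : y = (x + z) / k ↔ ∀ j ≤ n, sgen k n x y z j ∈ Set.Ico 0 (k : ℤ) := by
    rw [forall_sgen_mem_Ico_iff hodd hxor, sgen_self k n x y z hx hy hz,
      eq_div_iff_sub_mul_mem_Ico (by omega)]
    push_cast
    rfl
  refine ⟨htype1, fun hdiv j hj => ?_⟩
  have hnext := htype1.mp hdiv (j + 1) hj
  exact ⟨fun hle => sgen_succ_of_two_mul_add_one_lt hxor hj (by omega) hnext.1,
    fun hge => sgen_succ_of_le_two_mul hxor hj (by omega) hnext.2⟩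

theorem stmt8 (m n k : ℕ) (hk : k = 4 * m + 3) (x y z : ℕ)
    (hx : x < 2 ^ (n + 1)) (hy : y < 2 ^ (n + 1)) (hz : z < 2 ^ (n + 1))
    (hxor : x ^^^ y ^^^ z = 0)
    (hxn : bitd x n = 1) (hzn : bitd z n = 1) (hyn : bitd y n = 0) :
    (y = (x + z) / k ↔ ∀ j ≤ n, 0 ≤ sgen k n x y z j ∧ sgen k n x y z j < k) ∧
    (y = (x + z) / k →
      ∀ j < n,
        (sgen (k : ℤ) n x y z j ≤ 2 * m →
          ((bitd x (n - j - 1) = 1 ∧ bitd y (n - j - 1) = 0 ∧ bitd z (n - j - 1) = 1 ∧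
              sgen k n x y z (j + 1) = P1 (sgen k n x y z j)) ∨
           (bitd x (n - j - 1) = 0 ∧ bitd y (n - j - 1) = 0 ∧ bitd z (n - j - 1) = 0 ∧
              sgen k n x y z (j + 1) = P2 (sgen k n x y z j)))) ∧
        (2 * (m : ℤ) + 2 ≤ sgen k n x y z j →
          ((bitd x (n - j - 1) = 1 ∧ bitd y (n - j - 1) = 1 ∧ bitd z (n - j - 1) = 0) ∨
           (bitd x (n - j - 1) = 0 ∧ bitd y (n - j - 1) = 1 ∧ bitd z (n - j - 1) = 1)) ∧
          sgen k n x y z (j + 1) = P3 k (sgen k n x y z j))) :=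
  stmt8_general m n k hk x y z hx hy hz hxor
end

section
/- Let m be a nonnegative integer, k = 4m+3, and let x, y, z, v, w be nonnegative integers less than 2^{n+1} such that x ⊕ y ⊕ z = 0 and y = ⌊(x+z)/k⌋, and x ⊕ v ⊕ w = 0 and v < ⌊(x+w)/k⌋. Then there exists a nonnegative integer t with t + 1 ≤ n such that the binary digits satisfy y_{n−j} = v_{n−j} and z_{n−j} = w_{n−j} for all j = 0, 1, ..., t, and y_{n−t−1} > v_{n−t−1}. In particular, y > v. -/
/-!
Put `f a = x + (x ⊕ a)`. For `k ≡ 3 (mod 4)` the inequality `⌊f a / k⌋ ≤ a`, i.e.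
`f a < (a + 1) k`, propagates from `a` to `a + 1`, even with a margin of `2`: for odd `a`, halving
`x` and `a` reduces it to the same statement for `⌊a / 2⌋`; for even `a`, `f (a + 1) = f a ± 1`, and
when the sign is `+` (`x` even) we have `f a ≡ a (mod 4)` while `(a + 1) k ≡ a + 3 (mod 4)`.
Since `y = ⌊f y / k⌋` and `v < ⌊f v / k⌋`, this forces `v < y`. From `k ≥ 3`, `y < 2 ^ n`, and as
`z ⊕ w = y ⊕ v`, both pairs `(y, v)` and `(z, w)` agree above the leading bit of `y ⊕ v`, where
`y` has a `1` and `v` a `0`.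
-/

namespace Nat

theorem xor_eq_two_mul_xor_div_two_add_mod_two (u v : ℕ) :
    u ^^^ v = 2 * (u / 2 ^^^ v / 2) + (u + v) % 2 := by
  rw [← xor_div_two, ← xor_mod_two_eq]
  omega

theorem add_xor_mod_four_of_even {x : ℕ} (hx : x % 2 = 0) (a : ℕ) :
    (x + (x ^^^ a)) % 4 = a % 4 := by
  have hxa : (x ^^^ a) % 4 = x % 4 ^^^ a % 4 := xor_mod_two_pow (n := 2)
  rw [Nat.add_mod, hxa]
  have hx4 : x % 4 = 0 ∨ x % 4 = 2 := by omega
  have ha4 : a % 4 < 4 := mod_lt a (by norm_num)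
  generalize a % 4 = r at *
  rcases hx4 with hx4 | hx4 <;> rw [hx4] <;> interval_cases r <;> rfl

theorem add_xor_succ_add_two_le {k : ℕ} (hk : k % 4 = 3) {a x : ℕ}
    (h : x + (x ^^^ a) < (a + 1) * k) : x + (x ^^^ (a + 1)) + 2 ≤ (a + 1) * k := by
  induction a using Nat.strong_induction_on generalizing x with
  | _ a ih =>
    have hxa := xor_eq_two_mul_xor_div_two_add_mod_two x a
    have hxa' := xor_eq_two_mul_xor_div_two_add_mod_two x (a + 1)
    rcases Nat.even_or_odd' a with ⟨b, rfl | rfl⟩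
    · rw [show (2 * b + 1) / 2 = 2 * b / 2 by omega] at hxa'
      have hk4 : (2 * b + 1) * k % 4 = (2 * b + 1) * 3 % 4 := by rw [Nat.mul_mod, hk]; omega
      rcases Nat.mod_two_eq_zero_or_one x with hx | hx
      · have := add_xor_mod_four_of_even hx (2 * b)
        omega
      · omega
    · rw [show (2 * b + 1) / 2 = b by omega] at hxa
      rw [show (2 * b + 1 + 1) / 2 = b + 1 by omega] at hxa'
      have hk2 : (2 * b + 1 + 1) * k = 2 * ((b + 1) * k) := by ring
      have := ih b (by omega) (x := x / 2) (by omega)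
      omega

theorem add_xor_div_le_of_le {k : ℕ} (hk : k % 4 = 3) {x a b : ℕ}
    (h : (x + (x ^^^ a)) / k ≤ a) (hab : a ≤ b) : (x + (x ^^^ b)) / k ≤ b := by
  have hk0 : 0 < k := by omega
  rw [← Nat.lt_add_one_iff, Nat.div_lt_iff_lt_mul hk0] at h ⊢
  induction b, hab using Nat.le_induction with
  | base => exact h
  | succ b _ ih =>
    have hstep := add_xor_succ_add_two_le hk ih
    have hmono : (b + 1) * k ≤ (b + 1 + 1) * k := Nat.mul_le_mul_right k (by omega)
    omega

theorem lt_of_add_xor_div_le {k : ℕ} (hk : k % 4 = 3) {x y v : ℕ}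
    (hy : (x + (x ^^^ y)) / k ≤ y) (hv : v < (x + (x ^^^ v)) / k) : v < y := by
  by_contra! hyv
  exact (add_xor_div_le_of_le hk hy hyv).not_gt hv

theorem xor_lt_two_pow_of_three_mul_le {x z n : ℕ} (hx : x < 2 ^ (n + 1))
    (hz : z < 2 ^ (n + 1)) (h : 3 * (x ^^^ z) ≤ x + z) : x ^^^ z < 2 ^ n := by
  by_contra! hge
  have hpow : 2 ^ (n + 1) = 2 * 2 ^ n := by ring
  have hx1 : x / 2 ^ n = 1 := Nat.div_eq_of_lt_le (by omega) (by omega)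
  have hz1 : z / 2 ^ n = 1 := Nat.div_eq_of_lt_le (by omega) (by omega)
  have hxz : (x ^^^ z) / 2 ^ n = 0 := by rw [xor_div_two_pow, hx1, hz1]; rfl
  rw [Nat.div_eq_zero_iff_lt (by positivity)] at hxz
  omega

theorem exists_testBit_of_lt {v y : ℕ} (h : v < y) :
    ∃ i, (∀ j, i < j → y.testBit j = v.testBit j) ∧ y.testBit i = true ∧ v.testBit i = false := by
  obtain ⟨i, hi, habove⟩ := exists_most_significant_bit (xor_ne_zero_iff.mpr h.ne')
  have hagree : ∀ j, i < j → y.testBit j = v.testBit j := fun j hj => by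
    simpa [testBit_xor] using habove j hj
  refine ⟨i, hagree, ?_⟩
  rw [testBit_xor] at hi
  cases hyi : y.testBit i <;> cases hvi : v.testBit i <;> simp [hyi, hvi] at hi
  · exact absurd (lt_of_testBit i hyi hvi hagree) h.not_gt
  · exact ⟨rfl, rfl⟩

end Nat

theorem stmt10_general (m k n : ℕ) (hk : k = 4 * m + 3) (x y z v w : ℕ)
    (hx : x < 2 ^ (n + 1)) (hz : z < 2 ^ (n + 1))
    (h1 : x ^^^ y ^^^ z = 0) (h2 : y = (x + z) / k)
    (h3 : x ^^^ v ^^^ w = 0) (h4 : v < (x + w) / k) :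
    (∃ t : ℕ, t + 1 ≤ n ∧
      (∀ j ≤ t, bitd y (n - j) = bitd v (n - j) ∧ bitd z (n - j) = bitd w (n - j)) ∧
      bitd v (n - (t + 1)) < bitd y (n - (t + 1))) ∧
    v < y := by
  have hz' : x ^^^ y = z := Nat.xor_eq_zero_iff.mp h1
  have hw' : x ^^^ v = w := Nat.xor_eq_zero_iff.mp h3
  have hvy : v < y :=
    Nat.lt_of_add_xor_div_le (k := k) (by omega) (by rw [hz', ← h2]) (by rwa [hw'])
  have hyn : y < 2 ^ n := by
    have hxz : x ^^^ z = y := by rw [← hz', Nat.xor_xor_cancel_left]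
    have h3y : 3 * (x ^^^ z) ≤ x + z := calc
      3 * (x ^^^ z) = 3 * y := by rw [hxz]
      _ ≤ k * y := Nat.mul_le_mul_right y (by omega)
      _ ≤ x + z := by rw [h2, mul_comm]; exact Nat.div_mul_le_self _ _
    exact hxz ▸ Nat.xor_lt_two_pow_of_three_mul_le hx hz h3y
  obtain ⟨i, habove, hyi, hvi⟩ := Nat.exists_testBit_of_lt hvy
  have hin : i < n :=
    (Nat.pow_lt_pow_iff_right (by norm_num)).mp ((Nat.ge_two_pow_of_testBit hyi).trans_lt hyn)
  refine ⟨⟨n - 1 - i, by omega, fun j hj => ?_, ?_⟩, hvy⟩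
  · simp only [bitd, ← Nat.toNat_testBit, ← hz', ← hw', Nat.testBit_xor,
      habove (n - j) (by omega), and_self]
  · simp [bitd, ← Nat.toNat_testBit, show n - (n - 1 - i + 1) = i by omega, hyi, hvi]

theorem stmt10 (m k n : ℕ) (hk : k = 4 * m + 3) (x y z v w : ℕ)
    (hx : x < 2 ^ (n + 1)) (hy : y < 2 ^ (n + 1)) (hz : z < 2 ^ (n + 1))
    (hv : v < 2 ^ (n + 1)) (hw : w < 2 ^ (n + 1))
    (h1 : x ^^^ y ^^^ z = 0) (h2 : y = (x + z) / k)
    (h3 : x ^^^ v ^^^ w = 0) (h4 : v < (x + w) / k) :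
    (∃ t : ℕ, t + 1 ≤ n ∧
      (∀ j ≤ t, bitd y (n - j) = bitd v (n - j) ∧ bitd z (n - j) = bitd w (n - j)) ∧
      bitd v (n - (t + 1)) < bitd y (n - (t + 1))) ∧
    v < y :=
  stmt10_general m k n hk x y z v w hx hz h1 h2 h3 h4
end

section
/- Let m be a nonnegative integer and k = 4m+3. Suppose x, y, z are nonnegative integers with x ⊕ y ⊕ z = 0 and y ≤ ⌊(x+z)/k⌋. Then: (i) u ⊕ y ⊕ z ≠ 0 for every nonnegative integer u < x; (ii) x ⊕ v ⊕ z ≠ 0 for every nonnegative integer v < y; (iii) x ⊕ y ⊕ w ≠ 0 for every nonnegative integer w < z; (iv) x ⊕ v ⊕ w ≠ 0 for all nonnegative integers v, w with v < y, w < z and v = ⌊(x+w)/k⌋; (v) u ⊕ v ⊕ z ≠ 0 for all nonnegative integers u, v with u < x, v < y and v = ⌊(u+z)/k⌋. -/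
/-! If `x ^^^ y = z` then `x + z = y + 2 * Nat.ldiff x y`, where `Nat.ldiff x y` keeps the bits of
`x` that are not in `y`. With `k = 2c + 1`, the hypothesis `k * y ≤ x + z` therefore says
`c * y ≤ Nat.ldiff x y`, while a move to a zero position `(x, v, w)` with `v = (x + w) / k` would force
`Nat.ldiff x v ≤ c * (v + 1)`. A binary induction shows that for odd `c` (this is where `k = 4m + 3`
comes in) `c * y ≤ Nat.ldiff x y` and `v < y` imply `c * (v + 1) < Nat.ldiff x v`. The move to
`(u, v, z)` is the same move with `x` and `z` exchanged, and moves changing one coordinate are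
excluded because xor is cancellative. -/

namespace Nat

theorem ldiff_div_two (a b : ℕ) : ldiff a b / 2 = ldiff (a / 2) (b / 2) :=
  eq_of_testBit_eq fun i => by simp only [testBit_div_two, testBit_ldiff]

theorem ldiff_mod_two_eq_one {a b : ℕ} : ldiff a b % 2 = 1 ↔ a % 2 = 1 ∧ b % 2 = 0 := by
  have h := testBit_ldiff a b 0
  simp only [testBit_zero] at h
  rwa [← decide_not, ← Bool.decide_and, decide_eq_decide, ← ne_eq, mod_two_ne_one] at h

theorem add_eq_xor_add_two_mul_and (a b : ℕ) : a + b = (a ^^^ b) + 2 * (a &&& b) := by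
  induction a using Nat.strong_induction_on generalizing b with
  | _ a ih =>
  rcases Nat.eq_zero_or_pos a with rfl | ha
  · simp
  have hhalf := ih (a / 2) (by omega) (b / 2)
  rw [← xor_div_two, ← and_div_two] at hhalf
  have hxor := div_add_mod (a ^^^ b) 2
  have hand := div_add_mod (a &&& b) 2
  have hxor_mod := @xor_mod_two_eq_one a b
  have hand_mod := @and_mod_two_eq_one a b
  omega

theorem and_xor_self_eq_ldiff (a b : ℕ) : a &&& (a ^^^ b) = ldiff a b :=
  eq_of_testBit_eq fun i => by
    simp only [testBit_and, testBit_xor, testBit_ldiff]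
    cases a.testBit i <;> cases b.testBit i <;> rfl

theorem add_xor_self_eq_add_two_mul_ldiff (a b : ℕ) : a + (a ^^^ b) = b + 2 * ldiff a b := by
  rw [add_eq_xor_add_two_mul_and, and_xor_self_eq_ldiff, xor_cancel_left]

theorem mul_succ_lt_ldiff_of_lt {c : ℕ} (hc : Odd c) {a y v : ℕ}
    (h : c * y ≤ ldiff a y) (hv : v < y) : c * (v + 1) < ldiff a v := by
  induction y using Nat.strong_induction_on generalizing a v with
  | _ y ih =>
  have hc2 := odd_iff.mp hc
  have hy : c * y = 2 * (c * (y / 2)) + c * (y % 2) := by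
    conv_lhs => rw [← div_add_mod y 2]
    ring
  have hv' : c * (v + 1) = 2 * (c * (v / 2)) + c * (v % 2) + c := by
    conv_lhs => rw [← div_add_mod v 2]
    ring
  have hLy := div_add_mod (ldiff a y) 2
  have hLv := div_add_mod (ldiff a v) 2
  simp only [ldiff_div_two] at hLy hLv
  rcases Nat.lt_or_ge (v / 2) (y / 2) with hlt | hge
  · have hhalf := ih (y / 2) (by omega) (a := a / 2) (by omega) hlt
    have hvs : c * (v % 2) ≤ c := mul_le_of_le_one_right (Nat.zero_le c) (by omega)
    rw [Nat.mul_add_one] at hhalf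
    omega
  · have hy2 : y % 2 = 1 := by omega
    have hv2 : v % 2 = 0 := by omega
    have hLy2 : ldiff a y % 2 = 0 := by
      have := @ldiff_mod_two_eq_one a y
      omega
    rw [hy2, mul_one] at hy
    rw [hv2, mul_zero] at hv'
    rw [show v / 2 = y / 2 by omega] at hv' hLv
    -- `c * y ≤ ldiff a y` now reads `2 * (c * (y / 2)) + c ≤ 2 * ldiff (a / 2) (y / 2)`,
    -- which is strict because `c` is odd.
    omega

end Nat

theorem xor_xor_ne_zero_of_lt_of_eq_div {c x y z v w : ℕ} (hc : Odd c) (h0 : x ^^^ y ^^^ z = 0)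
    (h1 : (2 * c + 1) * y ≤ x + z) (hv : v < y) (hvw : v = (x + w) / (2 * c + 1)) :
    x ^^^ v ^^^ w ≠ 0 := by
  intro hw
  have hxz : x + z = y + 2 * Nat.ldiff x y := by
    rw [← Nat.add_xor_self_eq_add_two_mul_ldiff, xor_eq_zero_iff.mp h0]
  have hxw : x + w = v + 2 * Nat.ldiff x v := by
    rw [← Nat.add_xor_self_eq_add_two_mul_ldiff, xor_eq_zero_iff.mp hw]
  have hy : c * y ≤ Nat.ldiff x y := by linarith
  have hlt : x + w < (2 * c + 1) * (v + 1) := by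
    rw [hvw]
    exact Nat.lt_mul_div_succ _ (by omega)
  have := Nat.mul_succ_lt_ldiff_of_lt hc hy hv
  linarith

theorem stmt11 (m k : ℕ) (hk : k = 4 * m + 3) (x y z : ℕ)
    (h0 : x ^^^ y ^^^ z = 0) (h1 : y ≤ (x + z) / k) :
    (∀ u < x, u ^^^ y ^^^ z ≠ 0) ∧
    (∀ v < y, x ^^^ v ^^^ z ≠ 0) ∧
    (∀ w < z, x ^^^ y ^^^ w ≠ 0) ∧
    (∀ v w : ℕ, v < y → w < z → v = (x + w) / k → x ^^^ v ^^^ w ≠ 0) ∧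
    (∀ u v : ℕ, u < x → v < y → v = (u + z) / k → u ^^^ v ^^^ z ≠ 0) := by
  obtain rfl : k = 2 * (2 * m + 1) + 1 := by omega
  have hc : Odd (2 * m + 1) := odd_two_mul_add_one m
  have hy : (2 * (2 * m + 1) + 1) * y ≤ x + z := by
    rw [mul_comm]
    exact (Nat.le_div_iff_mul_le (by omega)).mp h1
  refine ⟨fun u hu h => hu.ne (by simpa using h.trans h0.symm),
    fun v hv h => hv.ne (by simpa using h.trans h0.symm),
    fun w hw h => hw.ne (by simpa using h.trans h0.symm),
    fun v w hv _ hvw => xor_xor_ne_zero_of_lt_of_eq_div hc h0 hy hv hvw,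
    fun u v _ hv hvu => ?_⟩
  have := xor_xor_ne_zero_of_lt_of_eq_div (x := z) (z := x) (w := u) hc (by rw [← h0]; ac_rfl)
    (by rwa [add_comm z x]) hv (by rwa [add_comm z u])
  rwa [show z ^^^ v ^^^ u = u ^^^ v ^^^ z by ac_rfl] at this
end

section
/- Let m be a nonnegative integer and k = 4m+3. Suppose x, y, z are nonnegative integers with x ⊕ y ⊕ z ≠ 0 and y ≤ ⌊(x+z)/k⌋. Then at least one of the following holds: (i) x ⊕ y ⊕ w = 0 for some nonnegative integer w with w < z and y ≤ ⌊(x+w)/k⌋; (ii) x ⊕ v ⊕ z = 0 for some nonnegative integer v with v < y ≤ ⌊(x+z)/k⌋; (iii) u ⊕ y ⊕ z = 0 for some nonnegative integer u with u < x and y ≤ ⌊(u+z)/k⌋; (iv) x ⊕ v ⊕ w = 0 for some nonnegative integers v, w with v < y, w < z and v = ⌊(x+w)/k⌋; (v) u ⊕ v ⊕ z = 0 for some nonnegative integers u, v with u < x, v < y and v = ⌊(u+z)/k⌋. -/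
/-!
By `Nat.xor_trichotomy` one pile exceeds the nim-sum of the other two, and reducing it to that
nim-sum is a nim-zero move. Only a move on the first or the third pile can violate the constraint
`y ≤ ⌊(x + z) / k⌋`; by symmetry say it is `z ↦ x ⊕ y`, and it fails exactly when
`F y < y k`, where `F v = x + (x ⊕ v)`. For odd `k`, `F (t + 1) < (t + 1) k` forces
`F t < (t + 1) k` (induction on the binary digits of `t`), so descending from `y`, the first `t < y`
with `t k ≤ F t` satisfies `⌊F t / k⌋ = t`, and `(t, x ⊕ t)` is a legal move on the last two piles.
-/

theorem Nat.add_xor_lt_succ_mul_of_add_xor_succ_lt {k : ℕ} (hk : Odd k) (t a : ℕ)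
    (h : a + (a ^^^ (t + 1)) < (t + 1) * k) : a + (a ^^^ t) < (t + 1) * k := by
  obtain ⟨j, rfl⟩ := hk
  induction t using Nat.strong_induction_on generalizing a with
  | _ t ih =>
    have hd : (a ^^^ t) / 2 = a / 2 ^^^ t / 2 := Nat.xor_div_two
    have hd' : (a ^^^ (t + 1)) / 2 = a / 2 ^^^ (t + 1) / 2 := Nat.xor_div_two
    have hm : (a ^^^ t) % 2 = 1 ↔ ¬(a % 2 = 1 ↔ t % 2 = 1) := Nat.xor_mod_two_eq_one
    have hm' : (a ^^^ (t + 1)) % 2 = 1 ↔ ¬(a % 2 = 1 ↔ (t + 1) % 2 = 1) := Nat.xor_mod_two_eq_one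
    rcases Nat.even_or_odd' t with ⟨s, rfl | rfl⟩
    · -- `a + (a ^^^ 2s)` is even and `(2s + 1) k` is odd
      rw [show (2 * s + 1) / 2 = 2 * s / 2 by omega] at hd'
      have : (2 * s + 1) * (2 * j + 1) = 2 * (s * (2 * j + 1) + j) + 1 := by ring
      omega
    · rw [show (2 * s + 1) / 2 = s by omega] at hd
      rw [show (2 * s + 1 + 1) / 2 = s + 1 by omega] at hd'
      have hs := ih s (by omega) (a / 2)
      have : (2 * s + 1 + 1) * (2 * j + 1) = 2 * ((s + 1) * (2 * j + 1)) := by ring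
      omega

theorem Nat.exists_lt_add_xor_div_eq {a k : ℕ} (hk : Odd k) :
    ∀ y, a + (a ^^^ y) < y * k → ∃ v < y, (a + (a ^^^ v)) / k = v
  | 0, h => by simp at h
  | t + 1, h => by
    have hlt := Nat.add_xor_lt_succ_mul_of_add_xor_succ_lt hk t a h
    by_cases hle : t * k ≤ a + (a ^^^ t)
    · exact ⟨t, t.lt_succ_self, Nat.div_eq_of_lt_le hle hlt⟩
    · obtain ⟨v, hv, hvk⟩ := Nat.exists_lt_add_xor_div_eq (a := a) hk t (by omega)
      exact ⟨v, by omega, hvk⟩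

theorem Nat.le_add_xor_div_or_exists {a c y k : ℕ} (hk : Odd k) (hy : y ≤ (a + c) / k) :
    y ≤ (a + (a ^^^ y)) / k ∨ ∃ v < y, a ^^^ v < c ∧ (a + (a ^^^ v)) / k = v := by
  have hk0 : 0 < k := hk.pos
  refine (le_or_gt y _).imp id fun hlt ↦ ?_
  obtain ⟨v, hv, hvk⟩ := Nat.exists_lt_add_xor_div_eq hk y ((Nat.div_lt_iff_lt_mul hk0).mp hlt)
  have hF : a + (a ^^^ v) < y * k := (Nat.div_lt_iff_lt_mul hk0).mp (by rwa [hvk])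
  have hyc : y * k ≤ a + c := (Nat.le_div_iff_mul_le hk0).mp hy
  exact ⟨v, hv, by omega, hvk⟩

theorem stmt13 (m k : ℕ) (hk : k = 4 * m + 3) (x y z : ℕ)
    (h0 : x ^^^ y ^^^ z ≠ 0) (h1 : y ≤ (x + z) / k) :
    (∃ w : ℕ, w < z ∧ x ^^^ y ^^^ w = 0 ∧ y ≤ (x + w) / k) ∨
    (∃ v : ℕ, v < y ∧ x ^^^ v ^^^ z = 0) ∨
    (∃ u : ℕ, u < x ∧ u ^^^ y ^^^ z = 0 ∧ y ≤ (u + z) / k) ∨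
    (∃ v w : ℕ, v < y ∧ w < z ∧ v = (x + w) / k ∧ x ^^^ v ^^^ w = 0) ∨
    (∃ u v : ℕ, u < x ∧ v < y ∧ v = (u + z) / k ∧ u ^^^ v ^^^ z = 0) := by
  have hodd : Odd k := ⟨2 * m + 1, by omega⟩
  rcases Nat.xor_trichotomy h0 with hx | hy | hz
  · rw [add_comm] at h1
    rcases Nat.le_add_xor_div_or_exists (a := z) hodd h1 with hu | ⟨v, hv, hu, hvk⟩
    · refine .inr (.inr (.inl ⟨y ^^^ z, hx, by simp, ?_⟩))
      rwa [add_comm, Nat.xor_comm]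
    · refine .inr (.inr (.inr (.inr ⟨z ^^^ v, v, hu, hv, by rw [add_comm, hvk], ?_⟩)))
      rw [Nat.xor_comm z, Nat.xor_assoc, Nat.xor_self]
  · exact .inr (.inl ⟨x ^^^ z, by rwa [Nat.xor_comm], by simp⟩)
  · rcases Nat.le_add_xor_div_or_exists (a := x) hodd h1 with hw | ⟨v, hv, hw, hvk⟩
    · exact .inl ⟨x ^^^ y, hz, by simp, hw⟩
    · exact .inr (.inr (.inr (.inl ⟨v, x ^^^ v, hv, hw, hvk.symm, by simp⟩)))
end

section
/- Let m be a nonnegative integer and k = 4m+3. For every position (x,y,z) ∈ B_k, there exists a position in movek((x,y,z)) that belongs to A_k; that is, movek((x,y,z)) ∩ A_k ≠ ∅. -/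
/-- The set of positions reachable in one move from (x, y, z) in the
triangular chocolate bar game. -/
def movek (k : ℕ) (p : ℕ × ℕ × ℕ) : Set (ℕ × ℕ × ℕ) :=
  {q | (∃ u < p.1, q = (u, p.2.1, p.2.2)) ∨
       (∃ v < p.2.1, q = (p.1, v, p.2.2)) ∨
       (∃ w < p.2.2, q = (p.1, p.2.1, w)) ∨
       (∃ u < p.1, q = (u, min p.2.1 ((u + p.2.2) / k), p.2.2)) ∨
       (∃ w < p.2.2, q = (p.1, min p.2.1 ((p.1 + w) / k), w))}

/-- A_k = { (x,y,z) : y ≤ ⌊(x+z)/k⌋ and x ⊕ y ⊕ z = 0 }. -/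
def Ak (k : ℕ) : Set (ℕ × ℕ × ℕ) :=
  {p | p.2.1 ≤ (p.1 + p.2.2) / k ∧ p.1 ^^^ p.2.1 ^^^ p.2.2 = 0}

/-- B_k = { (x,y,z) : y ≤ ⌊(x+z)/k⌋ and x ⊕ y ⊕ z ≠ 0 }. -/
def Bk (k : ℕ) : Set (ℕ × ℕ × ℕ) :=
  {p | p.2.1 ≤ (p.1 + p.2.2) / k ∧ p.1 ^^^ p.2.1 ^^^ p.2.2 ≠ 0}

/-!
Nim-sum reasoning gives a pile whose reduction makes the nim-sum zero. Reducing `y` keeps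
`y ≤ ⌊(x+z)/k⌋`. For `x` (symmetrically `z`) we always use the move that also caps `y`; it is the
plain move when reducing `x` to `y ⊕ z` keeps the constraint. Otherwise we aim at a capped value
`τ < y` with `⌊((τ ⊕ z) + z)/k⌋ = τ`. Such a `τ` exists for odd `k`: with `f t = (t ⊕ z) + z` we
have `f 0 ≥ 0` and `f y < k y`, and at the least `n` with `f n < k n` also `f (n - 1) < k n`,
by a recursion on the lowest bit.
-/

lemma xor_add_eq_two_mul (t b : ℕ) :
    (t ^^^ b) + b = 2 * ((t / 2 ^^^ b / 2) + b / 2) + (t + b) % 2 + b % 2 := by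
  have hdiv := Nat.div_add_mod (t ^^^ b) 2
  rw [Nat.xor_div_two, Nat.xor_mod_two_eq] at hdiv
  omega

lemma xor_add_lt_of_succ_xor_add_lt {k : ℕ} (hk : Odd k) (t b : ℕ)
    (h : ((t + 1) ^^^ b) + b < k * (t + 1)) : (t ^^^ b) + b < k * (t + 1) := by
  induction t using Nat.strong_induction_on generalizing b with
  | _ t ih =>
    rw [xor_add_eq_two_mul] at h ⊢
    rcases Nat.even_or_odd t with ⟨T, rfl⟩ | ⟨T, rfl⟩
    · -- here `f t ≤ f (t + 1) + 1`, an even number, while `k * (t + 1)` is odd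
      have hodd : k * (T + T + 1) % 2 = 1 := Nat.odd_iff.mp (hk.mul ⟨T, by ring⟩)
      have h1 : (T + T + 1) / 2 = T := by omega
      have h0 : (T + T) / 2 = T := by omega
      rw [h1] at h
      rw [h0]
      omega
    · have hk2 : k * (2 * T + 1 + 1) = 2 * (k * (T + 1)) := by ring
      have h1 : (2 * T + 1 + 1) / 2 = T + 1 := by omega
      have h0 : (2 * T + 1) / 2 = T := by omega
      rw [h1, hk2] at h
      rw [h0, hk2]
      have := ih T (by omega) (b / 2) (by omega)
      omega

lemma exists_lt_xor_add_div_eq {k y b : ℕ} (hk : Odd k) (h : (y ^^^ b) + b < k * y) :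
    ∃ τ < y, ((τ ^^^ b) + b) / k = τ := by
  have hex : ∃ n, (n ^^^ b) + b < k * n := ⟨y, h⟩
  have hn0 : Nat.find hex ≠ 0 := fun h0 => by simpa [h0] using Nat.find_spec hex
  obtain ⟨τ, hτ⟩ := Nat.exists_eq_succ_of_ne_zero hn0
  have hlow : k * τ ≤ (τ ^^^ b) + b := not_lt.mp (Nat.find_min hex (by omega))
  have hhigh := xor_add_lt_of_succ_xor_add_lt hk τ b (by simpa [hτ] using Nat.find_spec hex)
  refine ⟨τ, by have := Nat.find_min' hex h; omega, Nat.div_eq_of_lt_le ?_ ?_⟩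
  · rwa [mul_comm]
  · rwa [mul_comm]

lemma exists_lt_min_div_eq_xor {k y a b : ℕ} (hk : Odd k) (hy : k * y ≤ a + b)
    (ha : y ^^^ b < a) : ∃ u < a, min y ((u + b) / k) = u ^^^ b := by
  by_cases hfits : y ≤ ((y ^^^ b) + b) / k
  · exact ⟨y ^^^ b, ha, by rw [min_eq_left hfits, xor_cancel_right]⟩
  · have hk0 : 0 < k := hk.pos
    rw [not_le, Nat.div_lt_iff_lt_mul hk0, mul_comm] at hfits
    obtain ⟨τ, hτy, hτ⟩ := exists_lt_xor_add_div_eq hk hfits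
    have hlt := Nat.lt_mul_div_succ ((τ ^^^ b) + b) hk0
    rw [hτ] at hlt
    have hky : k * (τ + 1) ≤ k * y := Nat.mul_le_mul_left k hτy
    exact ⟨τ ^^^ b, by omega, by rw [hτ, min_eq_right hτy.le, xor_cancel_right]⟩

theorem movek_inter_Ak_nonempty_of_odd {k : ℕ} (hk : Odd k) :
    ∀ p ∈ Bk k, (movek k p ∩ Ak k).Nonempty := by
  rintro ⟨x, y, z⟩ ⟨hy, hs⟩
  dsimp only at hy hs
  rw [Nat.le_div_iff_mul_le hk.pos, mul_comm] at hy
  rcases Nat.xor_trichotomy hs with hx | hxz | hz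
  · obtain ⟨u, hux, hu⟩ := exists_lt_min_div_eq_xor hk hy hx
    refine ⟨_, Or.inr <| Or.inr <| Or.inr <| Or.inl ⟨u, hux, rfl⟩, min_le_right _ _, ?_⟩
    simp only [hu, xor_cancel_left, Nat.xor_self]
  · rw [Nat.xor_comm] at hxz
    refine ⟨(x, x ^^^ z, z), Or.inr <| Or.inl ⟨_, hxz, rfl⟩, ?_, ?_⟩
    · rw [Nat.le_div_iff_mul_le hk.pos, mul_comm]
      exact le_trans (Nat.mul_le_mul_left k hxz.le) hy
    · simp only [xor_cancel_left, Nat.xor_self]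
  · obtain ⟨w, hwz, hw⟩ := exists_lt_min_div_eq_xor hk (by omega) (Nat.xor_comm x y ▸ hz)
    refine ⟨_, Or.inr <| Or.inr <| Or.inr <| Or.inr ⟨w, hwz, rfl⟩, min_le_right _ _, ?_⟩
    simp only [add_comm x w, hw, Nat.xor_comm w x, xor_cancel_left, Nat.xor_self]

theorem stmt15 (m k : ℕ) (hk : k = 4 * m + 3) :
    ∀ p ∈ Bk k, (movek k p ∩ Ak k).Nonempty :=
  movek_inter_Ak_nonempty_of_odd ⟨2 * m + 1, by omega⟩
end

section
/- Let m be a nonnegative integer and k = 4m+3. In the triangular chocolate bar game with move function movek, a position (x,y,z) with y ≤ ⌊(x+z)/k⌋ is a P-position if and only if x ⊕ y ⊕ z = 0. Equivalently, A_k is exactly the set of P-positions and B_k is exactly the set of N-positions of this game. -/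
/-- Every move strictly decreases the coordinate sum. -/
lemma movek_sum_lt (k : ℕ) (p q : ℕ × ℕ × ℕ) (h : q ∈ movek k p) :
    q.1 + q.2.1 + q.2.2 < p.1 + p.2.1 + p.2.2 := by
  obtain ⟨x, y, z⟩ := p
  simp only [movek, Set.mem_setOf_eq] at h
  rcases h with ⟨u, hu, rfl⟩ | ⟨v, hv, rfl⟩ | ⟨w, hw, rfl⟩ | ⟨u, hu, rfl⟩ | ⟨w, hw, rfl⟩ <;>
    simp <;> omega

/-- p is a P-position iff no move from p leads to a P-position
(well-founded recursion on the coordinate sum). -/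
def PPosition (k : ℕ) (p : ℕ × ℕ × ℕ) : Prop :=
  ∀ q ∈ movek k p, ¬ PPosition k q
termination_by p.1 + p.2.1 + p.2.2
decreasing_by exact movek_sum_lt k p q (by assumption)

/-! The P-positions are shown to be exactly `Ak k` by the usual criterion: no move stays inside
`Ak k`, and every position outside `Ak k` has a move into it. Membership of `(x, x ⊕ z, z)` in
`Ak k` is measured by the slack `x + z - k (x ⊕ z)`. Halving all coordinates roughly halves
the slack, and the slack is even when `k` is odd; for `k ≡ 3 (mod 4)` this yields the key
monotonicity: if the slack of `(x, z)` is at least `-1` and `u ⊕ z < x ⊕ z`, then the slack of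
`(u, z)` is at least `k + 1`. Consequently every `z` has a partner `u` with
`⌊(u + z) / k⌋ = u ⊕ z`, and `(x, x ⊕ z, z) ∈ Ak k` exactly when `x ⊕ z ≤ u ⊕ z`. These partners
are the targets of the moves `(u, min y ⌊(u + z) / k⌋, z)`, which makes both halves of the
criterion a matter of comparing nim-sums. -/

theorem PPosition_iff_mem_of_movek {k : ℕ} {S : Set (ℕ × ℕ × ℕ)}
    (h_stable : ∀ p ∈ S, ∀ q ∈ movek k p, q ∉ S)
    (h_absorbing : ∀ p ∉ S, ∃ q ∈ movek k p, q ∈ S) (p : ℕ × ℕ × ℕ) :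
    PPosition k p ↔ p ∈ S := by
  induction hn : p.1 + p.2.1 + p.2.2 using Nat.strong_induction_on generalizing p with
  | _ n ih =>
  have ih_move : ∀ q ∈ movek k p, PPosition k q ↔ q ∈ S :=
    fun q hq => ih _ (hn ▸ movek_sum_lt k p q hq) q rfl
  rw [PPosition]
  constructor
  · intro hP
    by_contra hp
    obtain ⟨q, hq, hqS⟩ := h_absorbing p hp
    exact hP q hq ((ih_move q hq).2 hqS)
  · intro hp q hq hPq
    exact h_stable p hp q hq ((ih_move q hq).1 hPq)

lemma Nat.two_mul_add_xor_two_mul_add {a b i j : ℕ} (hi : i < 2) (hj : j < 2) :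
    (2 * a + i) ^^^ (2 * b + j) = 2 * (a ^^^ b) + (i + j) % 2 := by
  have h := Nat.div_add_mod ((2 * a + i) ^^^ (2 * b + j)) 2
  rw [Nat.xor_div_two, Nat.xor_mod_two_eq] at h
  rw [← h, show (2 * a + i) / 2 = a by omega, show (2 * b + j) / 2 = b by omega]
  omega

def slack (k x z : ℕ) : ℤ := x + z - k * (x ^^^ z : ℕ)

section Slack

variable {k : ℕ}

lemma xor_le_div_iff_slack_nonneg (hk : 0 < k) {x z : ℕ} :
    x ^^^ z ≤ (x + z) / k ↔ 0 ≤ slack k x z := by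
  rw [Nat.le_div_iff_mul_le hk, slack, ← Nat.cast_add, ← Nat.cast_mul, sub_nonneg, mul_comm,
    Nat.cast_le]

lemma div_eq_xor_iff_slack (hk : 0 < k) {x z : ℕ} :
    (x + z) / k = x ^^^ z ↔ 0 ≤ slack k x z ∧ slack k x z < k := by
  rw [Nat.div_eq_iff hk, Nat.le_sub_iff_add_le (by omega), slack]
  zify
  constructor <;> rintro ⟨h₁, h₂⟩ <;> constructor <;> linarith

lemma slack_two_mul_add (k x z : ℕ) {a c : ℕ} (ha : a < 2) (hc : c < 2) :
    slack k (2 * x + a) (2 * z + c) = 2 * slack k x z + a + c - k * ((a + c) % 2 : ℕ) := by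
  unfold slack
  rw [Nat.two_mul_add_xor_two_mul_add ha hc]
  push_cast
  ring

lemma even_slack (hk : Odd k) (x z : ℕ) : Even (slack k x z) := by
  simp [slack, parity_simps, hk]

lemma slack_ge_of_xor_lt (hk : k % 4 = 3) {x u z : ℕ} (hlt : u ^^^ z < x ^^^ z)
    (hx : -1 ≤ slack k x z) : k + 1 ≤ slack k u z := by
  induction hn : x ^^^ z using Nat.strong_induction_on generalizing x u z with
  | _ n ih =>
  obtain ⟨x, a, ha, rfl⟩ : ∃ x' a, a < 2 ∧ x = 2 * x' + a := ⟨x / 2, x % 2, by omega, by omega⟩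
  obtain ⟨u, b, hb, rfl⟩ : ∃ u' b, b < 2 ∧ u = 2 * u' + b := ⟨u / 2, u % 2, by omega, by omega⟩
  obtain ⟨z, c, hc, rfl⟩ : ∃ z' c, c < 2 ∧ z = 2 * z' + c := ⟨z / 2, z % 2, by omega, by omega⟩
  rw [Nat.two_mul_add_xor_two_mul_add ha hc, Nat.two_mul_add_xor_two_mul_add hb hc] at hlt
  rw [Nat.two_mul_add_xor_two_mul_add ha hc] at hn
  rw [slack_two_mul_add k x z ha hc] at hx
  rw [slack_two_mul_add k u z hb hc]
  rcases lt_or_ge (u ^^^ z) (x ^^^ z) with h | h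
  · have hx' : -1 ≤ slack k x z := by
      obtain hac | hac := Nat.mod_two_eq_zero_or_one (a + c) <;>
        simp only [hac, Nat.cast_zero, Nat.cast_one, mul_zero, mul_one] at hx <;> omega
    have hu := ih _ (by omega) h hx' rfl
    obtain hbc | hbc := Nat.mod_two_eq_zero_or_one (b + c) <;>
      simp only [hbc, Nat.cast_zero, Nat.cast_one, mul_zero, mul_one] <;> omega
  · obtain rfl : u = x := (xor_left_involutive z).injective (by omega : u ^^^ z = x ^^^ z)
    have hac : (a + c) % 2 = 1 := by omega
    have hbc : (b + c) % 2 = 0 := by omega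
    simp only [hac, hbc, Nat.cast_zero, Nat.cast_one, mul_zero, mul_one] at hx ⊢
    -- the slack `t` of the halves is even and `2 t ≥ k - 2`; since `k ≡ 3 (mod 4)`, `2 t ≥ k + 1`
    obtain ⟨s, hs⟩ := even_slack (Nat.odd_iff.mpr (by omega : k % 2 = 1)) u z
    omega

lemma xor_le_div_iff_xor_le (hk : k % 4 = 3) {u x z : ℕ} (hu : (u + z) / k = u ^^^ z) :
    x ^^^ z ≤ (x + z) / k ↔ x ^^^ z ≤ u ^^^ z := by
  have hk0 : 0 < k := by omega
  rw [div_eq_xor_iff_slack hk0] at hu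
  rw [xor_le_div_iff_slack_nonneg hk0]
  constructor
  · intro hx
    by_contra! hlt
    linarith [slack_ge_of_xor_lt hk hlt (by linarith)]
  · intro hle
    rcases hle.lt_or_eq with hlt | heq
    · linarith [slack_ge_of_xor_lt hk hlt (by linarith)]
    · rw [(xor_left_involutive z).injective heq]
      exact hu.1

lemma exists_two_mul_add_div_eq_xor (hk : Odd k) {u z c : ℕ} (hc : c < 2)
    (hu : (u + z) / k = u ^^^ z) :
    ∃ e < 2, (2 * u + e + (2 * z + c)) / k = (2 * u + e) ^^^ (2 * z + c) := by
  have hk0 := hk.pos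
  have hk2 : (k : ℤ) % 2 = 1 := by exact_mod_cast Nat.odd_iff.mp hk
  simp only [div_eq_xor_iff_slack hk0] at hu ⊢
  have h0 := slack_two_mul_add k u z (a := 0) (by norm_num) hc
  have h1 := slack_two_mul_add k u z (a := 1) (by norm_num) hc
  interval_cases c <;>
    simp only [Nat.reduceAdd, Nat.reduceMod, Nat.cast_zero, Nat.cast_one, mul_zero, mul_one] at h0 h1
  · by_cases hs : 2 * slack k u z < k
    · exact ⟨0, by norm_num, by omega, by omega⟩
    · exact ⟨1, by norm_num, by omega, by omega⟩
  · by_cases hs : 2 * slack k u z + 2 < k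
    · exact ⟨1, by norm_num, by omega, by omega⟩
    · exact ⟨0, by norm_num, by omega, by omega⟩

lemma exists_div_eq_xor (hk : Odd k) (z : ℕ) : ∃ u, (u + z) / k = u ^^^ z := by
  induction z using Nat.strong_induction_on with
  | _ z ih =>
  rcases Nat.eq_zero_or_pos z with rfl | hz
  · exact ⟨0, by simp⟩
  obtain ⟨z, c, hc, rfl⟩ : ∃ z' c, c < 2 ∧ z = 2 * z' + c := ⟨z / 2, z % 2, by omega, by omega⟩
  obtain ⟨u, hu⟩ := ih z (by omega)
  obtain ⟨e, -, he⟩ := exists_two_mul_add_div_eq_xor hk hc hu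
  exact ⟨_, he⟩

lemma exists_div_eq_xor_of_div_lt_xor (hk : Odd k) {x z : ℕ} (h : (x + z) / k < x ^^^ z) :
    (∃ u < x, (u + z) / k = u ^^^ z) ∨ ∃ w < z, (x + w) / k = x ^^^ w := by
  induction hn : x + z using Nat.strong_induction_on generalizing x z with
  | _ n ih =>
  have hk0 := hk.pos
  have hpos : 0 < x + z := by
    by_contra! h0
    obtain ⟨rfl, rfl⟩ : x = 0 ∧ z = 0 := by omega
    simp at h
  obtain ⟨x, a, ha, rfl⟩ : ∃ x' a, a < 2 ∧ x = 2 * x' + a := ⟨x / 2, x % 2, by omega, by omega⟩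
  obtain ⟨z, c, hc, rfl⟩ : ∃ z' c, c < 2 ∧ z = 2 * z' + c := ⟨z / 2, z % 2, by omega, by omega⟩
  by_cases h' : (x + z) / k < x ^^^ z
  · rcases ih (x + z) (by omega) h' rfl with ⟨u, hu, hbal⟩ | ⟨w, hw, hbal⟩
    · obtain ⟨e, he, hbal'⟩ := exists_two_mul_add_div_eq_xor hk hc hbal
      exact Or.inl ⟨_, by omega, hbal'⟩
    · rw [add_comm, Nat.xor_comm] at hbal
      obtain ⟨e, he, hbal'⟩ := exists_two_mul_add_div_eq_xor hk ha hbal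
      rw [add_comm, Nat.xor_comm] at hbal'
      exact Or.inr ⟨_, by omega, hbal'⟩
  · -- the halves form a pair of nonnegative slack, so the last bits decide
    rw [not_lt, xor_le_div_iff_slack_nonneg hk0] at h'
    rw [← not_le, xor_le_div_iff_slack_nonneg hk0, not_le, slack_two_mul_add k x z ha hc] at h
    have h00 := slack_two_mul_add k x z (a := 0) (c := 0) (by norm_num) (by norm_num)
    simp only [div_eq_xor_iff_slack hk0]
    interval_cases a <;> interval_cases c <;>
      simp only [Nat.reduceAdd, Nat.reduceMod, Nat.cast_zero, Nat.cast_one, mul_zero, mul_one]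
        at h h00
    · omega
    · exact Or.inr ⟨2 * z + 0, by omega, by omega, by omega⟩
    · exact Or.inl ⟨2 * x + 0, by omega, by omega, by omega⟩
    · omega

end Slack

lemma mem_Ak_iff {k x y z : ℕ} : (x, y, z) ∈ Ak k ↔ y = x ^^^ z ∧ x ^^^ z ≤ (x + z) / k := by
  rw [Ak, Set.mem_ofPred_eq, xor_eq_zero_iff, xor_eq_iff_right_eq]
  dsimp only
  constructor
  · rintro ⟨hy, rfl⟩
    exact ⟨rfl, hy⟩
  · rintro ⟨rfl, hy⟩
    exact ⟨hy, rfl⟩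

lemma swap_mem_Ak {k x y z : ℕ} : (z, y, x) ∈ Ak k ↔ (x, y, z) ∈ Ak k := by
  rw [mem_Ak_iff, mem_Ak_iff, add_comm, Nat.xor_comm]

lemma swap_mem_movek {k x y z : ℕ} {q : ℕ × ℕ × ℕ} (hq : q ∈ movek k (z, y, x)) :
    (q.2.2, q.2.1, q.1) ∈ movek k (x, y, z) := by
  rcases hq with ⟨u, hu, rfl⟩ | ⟨v, hv, rfl⟩ | ⟨w, hw, rfl⟩ | ⟨u, hu, rfl⟩ | ⟨w, hw, rfl⟩
  · exact Or.inr (Or.inr (Or.inl ⟨u, hu, rfl⟩))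
  · exact Or.inr (Or.inl ⟨v, hv, rfl⟩)
  · exact Or.inl ⟨w, hw, rfl⟩
  · exact Or.inr (Or.inr (Or.inr (Or.inr ⟨u, hu, by rw [add_comm]⟩)))
  · exact Or.inr (Or.inr (Or.inr (Or.inl ⟨w, hw, by rw [add_comm]⟩)))

section Ak

variable {k : ℕ}

lemma notMem_Ak_of_left_move (hk : k % 4 = 3) {x y z u : ℕ} (hp : (x, y, z) ∈ Ak k)
    (hu : u ≠ x) : (u, y, z) ∉ Ak k ∧ (u, min y ((u + z) / k), z) ∉ Ak k := by
  obtain ⟨rfl, hreg⟩ := mem_Ak_iff.1 hp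
  have plain : (u, x ^^^ z, z) ∉ Ak k := fun hq =>
    hu ((xor_left_involutive z).injective (mem_Ak_iff.1 hq).1.symm)
  refine ⟨plain, fun hq => ?_⟩
  rcases le_or_gt (x ^^^ z) ((u + z) / k) with hle | hlt
  · rw [min_eq_left hle] at hq
    exact plain hq
  · rw [min_eq_right hlt.le] at hq
    obtain ⟨hbal, -⟩ := mem_Ak_iff.1 hq
    have := (xor_le_div_iff_xor_le hk hbal).1 hreg
    omega

lemma notMem_Ak_of_mem_movek (hk : k % 4 = 3) {p q : ℕ × ℕ × ℕ} (hp : p ∈ Ak k)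
    (hq : q ∈ movek k p) : q ∉ Ak k := by
  obtain ⟨x, y, z⟩ := p
  rcases hq with ⟨u, hu, rfl⟩ | ⟨v, hv, rfl⟩ | ⟨w, hw, rfl⟩ | ⟨u, hu, rfl⟩ | ⟨w, hw, rfl⟩
  · exact (notMem_Ak_of_left_move hk hp hu.ne).1
  · intro hq
    exact hv.ne ((mem_Ak_iff.1 hq).1.trans (mem_Ak_iff.1 hp).1.symm)
  · rw [← swap_mem_Ak]
    exact (notMem_Ak_of_left_move hk (swap_mem_Ak.2 hp) hw.ne).1
  · exact (notMem_Ak_of_left_move hk hp hu.ne).2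
  · rw [← swap_mem_Ak, add_comm]
    exact (notMem_Ak_of_left_move hk (swap_mem_Ak.2 hp) hw.ne).2

lemma exists_move_mem_Ak_of_div_eq_xor {x y z u : ℕ} (hu : u < x)
    (hbal : (u + z) / k = u ^^^ z) (hy : u ^^^ z ≤ y) :
    ∃ q ∈ movek k (x, y, z), q ∈ Ak k :=
  ⟨(u, min y ((u + z) / k), z), Or.inr (Or.inr (Or.inr (Or.inl ⟨u, hu, rfl⟩))),
    mem_Ak_iff.2 ⟨by rw [hbal, min_eq_right hy], hbal.ge⟩⟩

lemma exists_move_mem_Ak_of_swap {x y z : ℕ} (h : ∃ q ∈ movek k (z, y, x), q ∈ Ak k) :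
    ∃ q ∈ movek k (x, y, z), q ∈ Ak k := by
  obtain ⟨⟨a, b, c⟩, hq, hA⟩ := h
  exact ⟨(c, b, a), swap_mem_movek hq, swap_mem_Ak.2 hA⟩

lemma exists_move_mem_Ak_of_xor_lt_left (hk : k % 4 = 3) {x y z : ℕ} (hy : y ≤ (x + z) / k)
    (hlt : y ^^^ z < x) : ∃ q ∈ movek k (x, y, z), q ∈ Ak k := by
  by_cases hplain : y ≤ ((y ^^^ z) + z) / k
  · exact ⟨(y ^^^ z, y, z), Or.inl ⟨_, hlt, rfl⟩, mem_Ak_iff.2 ⟨by simp, by simpa using hplain⟩⟩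
  obtain ⟨u, hbal⟩ := exists_div_eq_xor (Nat.odd_iff.mpr (by omega : k % 2 = 1)) z
  have hyu : u ^^^ z < y := by
    have := (xor_le_div_iff_xor_le hk hbal (x := y ^^^ z)).not
    simp only [xor_cancel_right, not_le] at this
    exact this.1 (not_le.1 hplain)
  have hux : u < x := by
    by_contra! hxu
    have := Nat.div_le_div_right (c := k) (Nat.add_le_add_right hxu z)
    omega
  exact exists_move_mem_Ak_of_div_eq_xor hux hbal hyu.le

lemma exists_move_mem_Ak (hk : k % 4 = 3) {x y z : ℕ} (hp : (x, y, z) ∉ Ak k) :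
    ∃ q ∈ movek k (x, y, z), q ∈ Ak k := by
  by_cases hmid : x ^^^ z < y ∧ x ^^^ z ≤ (x + z) / k
  · exact ⟨(x, x ^^^ z, z), Or.inr (Or.inl ⟨_, hmid.1, rfl⟩), mem_Ak_iff.2 ⟨rfl, hmid.2⟩⟩
  rcases le_or_gt y ((x + z) / k) with hy | hy
  · have hxor : x ^^^ y ^^^ z ≠ 0 := fun h0 => hp ⟨hy, h0⟩
    rcases Nat.xor_trichotomy hxor with hlt | hlt | hlt
    · exact exists_move_mem_Ak_of_xor_lt_left hk hy hlt
    · rw [Nat.xor_comm] at hlt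
      exact absurd ⟨hlt, hlt.le.trans hy⟩ hmid
    · refine exists_move_mem_Ak_of_swap (exists_move_mem_Ak_of_xor_lt_left hk ?_ ?_)
      · rwa [add_comm]
      · rwa [Nat.xor_comm]
  · have hxz : (x + z) / k < x ^^^ z := by
      by_contra! hxz
      exact hmid ⟨by omega, hxz⟩
    rcases exists_div_eq_xor_of_div_lt_xor (Nat.odd_iff.mpr (by omega : k % 2 = 1)) hxz with
      ⟨u, hu, hbal⟩ | ⟨w, hw, hbal⟩
    · refine exists_move_mem_Ak_of_div_eq_xor hu hbal ?_
      rw [← hbal]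
      exact (Nat.div_le_div_right (by omega)).trans hy.le
    · rw [add_comm, Nat.xor_comm] at hbal
      refine exists_move_mem_Ak_of_swap (exists_move_mem_Ak_of_div_eq_xor hw hbal ?_)
      rw [← hbal]
      exact (Nat.div_le_div_right (by omega)).trans hy.le

theorem PPosition_iff_mem_Ak (hk : k % 4 = 3) (p : ℕ × ℕ × ℕ) : PPosition k p ↔ p ∈ Ak k :=
  PPosition_iff_mem_of_movek (fun _ hp _ hq => notMem_Ak_of_mem_movek hk hp hq)
    (fun ⟨_, _, _⟩ hp => exists_move_mem_Ak hk hp) p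

end Ak

theorem stmt16 (m k : ℕ) (hk : k = 4 * m + 3) :
    (∀ x y z : ℕ, y ≤ (x + z) / k → (PPosition k (x, y, z) ↔ x ^^^ y ^^^ z = 0)) ∧
    Ak k = {p | p.2.1 ≤ (p.1 + p.2.2) / k ∧ PPosition k p} ∧
    Bk k = {p | p.2.1 ≤ (p.1 + p.2.2) / k ∧ ¬ PPosition k p} := by
  have hP := PPosition_iff_mem_Ak (k := k) (by omega)
  refine ⟨fun x y z hy => ?_, ?_, ?_⟩
  · rw [hP]
    exact and_iff_right hy
  · ext p
    rw [Set.mem_ofPred_eq, hP]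
    exact ⟨fun h => ⟨h.1, h⟩, And.right⟩
  · ext p
    simp only [Bk, Set.mem_ofPred_eq, hP, Ak]
    tauto
end

section
/- Let k = 3. In the triangular chocolate bar game with move function movek, the Grundy number of the position (1,1,2) equals 4, whereas the nim-sum 1 ⊕ 1 ⊕ 2 equals 2; hence the Grundy number of a position (x,y,z) of this game is not always equal to x ⊕ y ⊕ z. -/
set_option linter.unreachableTactic false
set_option linter.unusedTactic false
set_option linter.unnecessarySeqFocus false


/-- The Grundy number: G(p) = mex { G(q) : q ∈ movek(p) }, i.e. the least
nonnegative integer different from G(q) for every q ∈ movek(p)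
(well-founded recursion on the coordinate sum). -/
noncomputable def grundy (k : ℕ) (p : ℕ × ℕ × ℕ) : ℕ :=
  sInf {g : ℕ | ∀ q ∈ movek k p, grundy k q ≠ g}
termination_by p.1 + p.2.1 + p.2.2
decreasing_by exact movek_sum_lt k p q (by assumption)

lemma sInf_eq' {S : Set ℕ} {n : ℕ} (h1 : n ∈ S) (h2 : ∀ m, m < n → m ∉ S) : sInf S = n :=
  le_antisymm (Nat.sInf_le h1) (le_of_not_gt fun h => h2 _ h (Nat.sInf_mem ⟨n, h1⟩))

lemma g000 : grundy 3 (0, 0, 0) = 0 := by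
  rw [grundy]
  apply sInf_eq'
  · intro q hq
    simp only [movek, Set.mem_setOf_eq] at hq
    rcases hq with ⟨u, hu, _⟩ | ⟨v, hv, _⟩ | ⟨w, hw, _⟩ | ⟨u, hu, _⟩ | ⟨w, hw, _⟩ <;> omega
  · intro m hm hmem
    omega

lemma g001 : grundy 3 (0, 0, 1) = 1 := by
  rw [grundy]
  apply sInf_eq'
  · intro q hq
    simp only [movek, Set.mem_setOf_eq] at hq
    rcases hq with ⟨u, hu, rfl⟩ | ⟨v, hv, rfl⟩ | ⟨w, hw, rfl⟩ | ⟨u, hu, rfl⟩ | ⟨w, hw, rfl⟩ <;>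
      first | omega | (interval_cases u <;> first | exact ne_of_eq_of_ne g000 (by decide)) | (interval_cases v <;> first | exact ne_of_eq_of_ne g000 (by decide)) | (interval_cases w <;> first | exact ne_of_eq_of_ne g000 (by decide))
  · intro m hm hmem
    interval_cases m
    · exact hmem (0, 0, 0) (Or.inr (Or.inr (Or.inl ⟨0, by norm_num, by decide⟩))) g000

lemma g010 : grundy 3 (0, 1, 0) = 1 := by
  rw [grundy]
  apply sInf_eq'
  · intro q hq
    simp only [movek, Set.mem_setOf_eq] at hq
    rcases hq with ⟨u, hu, rfl⟩ | ⟨v, hv, rfl⟩ | ⟨w, hw, rfl⟩ | ⟨u, hu, rfl⟩ | ⟨w, hw, rfl⟩ <;>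
      first | omega | (interval_cases u <;> first | exact ne_of_eq_of_ne g000 (by decide)) | (interval_cases v <;> first | exact ne_of_eq_of_ne g000 (by decide)) | (interval_cases w <;> first | exact ne_of_eq_of_ne g000 (by decide))
  · intro m hm hmem
    interval_cases m
    · exact hmem (0, 0, 0) (Or.inr (Or.inl ⟨0, by norm_num, by decide⟩)) g000

lemma g100 : grundy 3 (1, 0, 0) = 1 := by
  rw [grundy]
  apply sInf_eq'
  · intro q hq
    simp only [movek, Set.mem_setOf_eq] at hq
    rcases hq with ⟨u, hu, rfl⟩ | ⟨v, hv, rfl⟩ | ⟨w, hw, rfl⟩ | ⟨u, hu, rfl⟩ | ⟨w, hw, rfl⟩ <;>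
      first | omega | (interval_cases u <;> first | exact ne_of_eq_of_ne g000 (by decide)) | (interval_cases v <;> first | exact ne_of_eq_of_ne g000 (by decide)) | (interval_cases w <;> first | exact ne_of_eq_of_ne g000 (by decide))
  · intro m hm hmem
    interval_cases m
    · exact hmem (0, 0, 0) (Or.inl ⟨0, by norm_num, by decide⟩) g000

lemma g002 : grundy 3 (0, 0, 2) = 2 := by
  rw [grundy]
  apply sInf_eq'
  · intro q hq
    simp only [movek, Set.mem_setOf_eq] at hq
    rcases hq with ⟨u, hu, rfl⟩ | ⟨v, hv, rfl⟩ | ⟨w, hw, rfl⟩ | ⟨u, hu, rfl⟩ | ⟨w, hw, rfl⟩ <;>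
      first | omega | (interval_cases u <;> first | exact ne_of_eq_of_ne g000 (by decide) | exact ne_of_eq_of_ne g001 (by decide)) | (interval_cases v <;> first | exact ne_of_eq_of_ne g000 (by decide) | exact ne_of_eq_of_ne g001 (by decide)) | (interval_cases w <;> first | exact ne_of_eq_of_ne g000 (by decide) | exact ne_of_eq_of_ne g001 (by decide))
  · intro m hm hmem
    interval_cases m
    · exact hmem (0, 0, 0) (Or.inr (Or.inr (Or.inl ⟨0, by norm_num, by decide⟩))) g000
    · exact hmem (0, 0, 1) (Or.inr (Or.inr (Or.inl ⟨1, by norm_num, by decide⟩))) g001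

lemma g011 : grundy 3 (0, 1, 1) = 2 := by
  rw [grundy]
  apply sInf_eq'
  · intro q hq
    simp only [movek, Set.mem_setOf_eq] at hq
    rcases hq with ⟨u, hu, rfl⟩ | ⟨v, hv, rfl⟩ | ⟨w, hw, rfl⟩ | ⟨u, hu, rfl⟩ | ⟨w, hw, rfl⟩ <;>
      first | omega | (interval_cases u <;> first | exact ne_of_eq_of_ne g000 (by decide) | exact ne_of_eq_of_ne g001 (by decide) | exact ne_of_eq_of_ne g010 (by decide)) | (interval_cases v <;> first | exact ne_of_eq_of_ne g000 (by decide) | exact ne_of_eq_of_ne g001 (by decide) | exact ne_of_eq_of_ne g010 (by decide)) | (interval_cases w <;> first | exact ne_of_eq_of_ne g000 (by decide) | exact ne_of_eq_of_ne g001 (by decide) | exact ne_of_eq_of_ne g010 (by decide))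
  · intro m hm hmem
    interval_cases m
    · exact hmem (0, 0, 0) (Or.inr (Or.inr (Or.inr (Or.inr (⟨0, by norm_num, by decide⟩))))) g000
    · exact hmem (0, 0, 1) (Or.inr (Or.inl ⟨0, by norm_num, by decide⟩)) g001

lemma g101 : grundy 3 (1, 0, 1) = 0 := by
  rw [grundy]
  apply sInf_eq'
  · intro q hq
    simp only [movek, Set.mem_setOf_eq] at hq
    rcases hq with ⟨u, hu, rfl⟩ | ⟨v, hv, rfl⟩ | ⟨w, hw, rfl⟩ | ⟨u, hu, rfl⟩ | ⟨w, hw, rfl⟩ <;>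
      first | omega | (interval_cases u <;> first | exact ne_of_eq_of_ne g001 (by decide) | exact ne_of_eq_of_ne g100 (by decide)) | (interval_cases v <;> first | exact ne_of_eq_of_ne g001 (by decide) | exact ne_of_eq_of_ne g100 (by decide)) | (interval_cases w <;> first | exact ne_of_eq_of_ne g001 (by decide) | exact ne_of_eq_of_ne g100 (by decide))
  · intro m hm hmem
    omega

lemma g110 : grundy 3 (1, 1, 0) = 2 := by
  rw [grundy]
  apply sInf_eq'
  · intro q hq
    simp only [movek, Set.mem_setOf_eq] at hq
    rcases hq with ⟨u, hu, rfl⟩ | ⟨v, hv, rfl⟩ | ⟨w, hw, rfl⟩ | ⟨u, hu, rfl⟩ | ⟨w, hw, rfl⟩ <;>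
      first | omega | (interval_cases u <;> first | exact ne_of_eq_of_ne g000 (by decide) | exact ne_of_eq_of_ne g010 (by decide) | exact ne_of_eq_of_ne g100 (by decide)) | (interval_cases v <;> first | exact ne_of_eq_of_ne g000 (by decide) | exact ne_of_eq_of_ne g010 (by decide) | exact ne_of_eq_of_ne g100 (by decide)) | (interval_cases w <;> first | exact ne_of_eq_of_ne g000 (by decide) | exact ne_of_eq_of_ne g010 (by decide) | exact ne_of_eq_of_ne g100 (by decide))
  · intro m hm hmem
    interval_cases m
    · exact hmem (0, 0, 0) (Or.inr (Or.inr (Or.inr (Or.inl ⟨0, by norm_num, by decide⟩)))) g000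
    · exact hmem (0, 1, 0) (Or.inl ⟨0, by norm_num, by decide⟩) g010

lemma g012 : grundy 3 (0, 1, 2) = 3 := by
  rw [grundy]
  apply sInf_eq'
  · intro q hq
    simp only [movek, Set.mem_setOf_eq] at hq
    rcases hq with ⟨u, hu, rfl⟩ | ⟨v, hv, rfl⟩ | ⟨w, hw, rfl⟩ | ⟨u, hu, rfl⟩ | ⟨w, hw, rfl⟩ <;>
      first | omega | (interval_cases u <;> first | exact ne_of_eq_of_ne g000 (by decide) | exact ne_of_eq_of_ne g001 (by decide) | exact ne_of_eq_of_ne g002 (by decide) | exact ne_of_eq_of_ne g010 (by decide) | exact ne_of_eq_of_ne g011 (by decide)) | (interval_cases v <;> first | exact ne_of_eq_of_ne g000 (by decide) | exact ne_of_eq_of_ne g001 (by decide) | exact ne_of_eq_of_ne g002 (by decide) | exact ne_of_eq_of_ne g010 (by decide) | exact ne_of_eq_of_ne g011 (by decide)) | (interval_cases w <;> first | exact ne_of_eq_of_ne g000 (by decide) | exact ne_of_eq_of_ne g001 (by decide) | exact ne_of_eq_of_ne g002 (by decide) | exact ne_of_eq_of_ne g010 (by decide) | exact ne_of_eq_of_ne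 g011 (by decide))
  · intro m hm hmem
    interval_cases m
    · exact hmem (0, 0, 0) (Or.inr (Or.inr (Or.inr (Or.inr (⟨0, by norm_num, by decide⟩))))) g000
    · exact hmem (0, 0, 1) (Or.inr (Or.inr (Or.inr (Or.inr (⟨1, by norm_num, by decide⟩))))) g001
    · exact hmem (0, 0, 2) (Or.inr (Or.inl ⟨0, by norm_num, by decide⟩)) g002

lemma g102 : grundy 3 (1, 0, 2) = 3 := by
  rw [grundy]
  apply sInf_eq'
  · intro q hq
    simp only [movek, Set.mem_setOf_eq] at hq
    rcases hq with ⟨u, hu, rfl⟩ | ⟨v, hv, rfl⟩ | ⟨w, hw, rfl⟩ | ⟨u, hu, rfl⟩ | ⟨w, hw, rfl⟩ <;>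
      first | omega | (interval_cases u <;> first | exact ne_of_eq_of_ne g002 (by decide) | exact ne_of_eq_of_ne g100 (by decide) | exact ne_of_eq_of_ne g101 (by decide)) | (interval_cases v <;> first | exact ne_of_eq_of_ne g002 (by decide) | exact ne_of_eq_of_ne g100 (by decide) | exact ne_of_eq_of_ne g101 (by decide)) | (interval_cases w <;> first | exact ne_of_eq_of_ne g002 (by decide) | exact ne_of_eq_of_ne g100 (by decide) | exact ne_of_eq_of_ne g101 (by decide))
  · intro m hm hmem
    interval_cases m
    · exact hmem (1, 0, 1) (Or.inr (Or.inr (Or.inl ⟨1, by norm_num, by decide⟩))) g101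
    · exact hmem (1, 0, 0) (Or.inr (Or.inr (Or.inl ⟨0, by norm_num, by decide⟩))) g100
    · exact hmem (0, 0, 2) (Or.inl ⟨0, by norm_num, by decide⟩) g002

lemma g111 : grundy 3 (1, 1, 1) = 3 := by
  rw [grundy]
  apply sInf_eq'
  · intro q hq
    simp only [movek, Set.mem_setOf_eq] at hq
    rcases hq with ⟨u, hu, rfl⟩ | ⟨v, hv, rfl⟩ | ⟨w, hw, rfl⟩ | ⟨u, hu, rfl⟩ | ⟨w, hw, rfl⟩ <;>
      first | omega | (interval_cases u <;> first | exact ne_of_eq_of_ne g001 (by decide) | exact ne_of_eq_of_ne g011 (by decide) | exact ne_of_eq_of_ne g100 (by decide) | exact ne_of_eq_of_ne g101 (by decide) | exact ne_of_eq_of_ne g110 (by decide)) | (interval_cases v <;> first | exact ne_of_eq_of_ne g001 (by decide) | exact ne_of_eq_of_ne g011 (by decide) | exact ne_of_eq_of_ne g100 (by decide) | exact ne_of_eq_of_ne g101 (by decide) | exact ne_of_eq_of_ne g110 (by decide)) | (interval_cases w <;> first | exact ne_of_eq_of_ne g001 (by decide) | exact ne_of_eq_of_ne g011 (by decide) | exact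 ne_of_eq_of_ne g100 (by decide) | exact ne_of_eq_of_ne g101 (by decide) | exact ne_of_eq_of_ne g110 (by decide))
  · intro m hm hmem
    interval_cases m
    · exact hmem (1, 0, 1) (Or.inr (Or.inl ⟨0, by norm_num, by decide⟩)) g101
    · exact hmem (0, 0, 1) (Or.inr (Or.inr (Or.inr (Or.inl ⟨0, by norm_num, by decide⟩)))) g001
    · exact hmem (0, 1, 1) (Or.inl ⟨0, by norm_num, by decide⟩) g011

lemma g112 : grundy 3 (1, 1, 2) = 4 := by
  rw [grundy]
  apply sInf_eq'
  · intro q hq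
    simp only [movek, Set.mem_setOf_eq] at hq
    rcases hq with ⟨u, hu, rfl⟩ | ⟨v, hv, rfl⟩ | ⟨w, hw, rfl⟩ | ⟨u, hu, rfl⟩ | ⟨w, hw, rfl⟩ <;>
      first | omega | (interval_cases u <;> first | exact ne_of_eq_of_ne g002 (by decide) | exact ne_of_eq_of_ne g012 (by decide) | exact ne_of_eq_of_ne g100 (by decide) | exact ne_of_eq_of_ne g101 (by decide) | exact ne_of_eq_of_ne g102 (by decide) | exact ne_of_eq_of_ne g110 (by decide) | exact ne_of_eq_of_ne g111 (by decide)) | (interval_cases v <;> first | exact ne_of_eq_of_ne g002 (by decide) | exact ne_of_eq_of_ne g012 (by decide) | exact ne_of_eq_of_ne g100 (by decide) | exact ne_of_eq_of_ne g101 (by decide) | exact ne_of_eq_of_ne g102 (by decide) | exact ne_of_eq_of_ne g110 (by decide) | exact ne_of_eq_of_ne g111 (by decide)) | (interval_cases w <;> first | exact ne_of_eq_of_ne g002 (by decide) | exact ne_of_eq_of_ne g012 (by decide) | exact ne_of_eq_of_ne g100 (by decide) | exact ne_of_eq_of_ne g101 (by decide) | exact ne_of_eq_of_ne g102 (by decide)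 | exact ne_of_eq_of_ne g110 (by decide) | exact ne_of_eq_of_ne g111 (by decide))
  · intro m hm hmem
    interval_cases m
    · exact hmem (1, 0, 1) (Or.inr (Or.inr (Or.inr (Or.inr (⟨1, by norm_num, by decide⟩))))) g101
    · exact hmem (1, 0, 0) (Or.inr (Or.inr (Or.inr (Or.inr (⟨0, by norm_num, by decide⟩))))) g100
    · exact hmem (0, 0, 2) (Or.inr (Or.inr (Or.inr (Or.inl ⟨0, by norm_num, by decide⟩)))) g002
    · exact hmem (0, 1, 2) (Or.inl ⟨0, by norm_num, by decide⟩) g012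


theorem stmt17 :
    grundy 3 (1, 1, 2) = 4 ∧ (1 ^^^ 1 ^^^ 2 : ℕ) = 2 ∧
    ¬ ∀ p : ℕ × ℕ × ℕ, grundy 3 p = p.1 ^^^ p.2.1 ^^^ p.2.2 := by
  refine ⟨g112, by decide, fun h => ?_⟩
  have := h (1, 1, 2)
  rw [g112] at this
  simp at this
end
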